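/- arXiv:2210.09534 — 9 statements merged into one kernel-verified Lean document; each statement's English description precedes it below -/
import Mathlib

section
/- For every matroid M = (U, I) and every positive integer ℓ, the pair M^ℓ = (U, I^ℓ), where I^ℓ consists of all subsets of U that can be partitioned into ℓ sets each belonging to I, is itself a matroid. -/
/-- `I` is independent in the `ℓ`-fold union of the matroid with independence
predicate `Indep`: `I` can be partitioned into `ℓ` pairwise disjoint sets,
each independent. -/
def UnionIndep {U : Type*} [DecidableEq U] (Indep : Finset U → Prop) (ℓ : ℕ)
    (I : Finset U) : Prop :=
  ∃ f : Fin ℓ → Finset U, (∀ i, Indep (f i)) ∧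
    (∀ i j, i ≠ j → Disjoint (f i) (f j)) ∧ Finset.univ.sup f = I

lemma sup_card_eq {U : Type*} [DecidableEq U] {ℓ : ℕ} (f : Fin ℓ → Finset U)
    (hd : ∀ i j, i ≠ j → Disjoint (f i) (f j)) :
    (Finset.univ.sup f).card = ∑ i, (f i).card := by
  rw [Finset.sup_eq_biUnion, Finset.card_biUnion]
  intro x _ y _ hxy; exact hd x y hxy

lemma union_aux {U : Type*} [Fintype U] [DecidableEq U]
    (Indep : Finset U → Prop)
    (h_subset : ∀ I J : Finset U, I ⊆ J → Indep J → Indep I)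
    (h_exch : ∀ I J : Finset U, Indep I → Indep J → I.card < J.card →
      ∃ u ∈ J \ I, Indep (insert u I))
    (ℓ : ℕ) :
    ∀ n (f g : Fin ℓ → Finset U),
      ℓ * Fintype.card U - ∑ i, ((f i) ∩ (g i)).card ≤ n →
      (∀ i, Indep (f i)) → (∀ i j, i ≠ j → Disjoint (f i) (f j)) →
      (∀ i, Indep (g i)) → (∀ i j, i ≠ j → Disjoint (g i) (g j)) →
      (Finset.univ.sup f).card < (Finset.univ.sup g).card →
      ∃ u ∈ Finset.univ.sup g \ Finset.univ.sup f,
        ∃ f' : Fin ℓ → Finset U, (∀ i, Indep (f' i)) ∧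
          (∀ i j, i ≠ j → Disjoint (f' i) (f' j)) ∧
          Finset.univ.sup f' = insert u (Finset.univ.sup f) := by
  intro n
  induction n using Nat.strong_induction_on with
  | _ n ih =>
  intro f g hn hfI hfD hgI hgD hcard
  rw [sup_card_eq f hfD, sup_card_eq g hgD] at hcard
  obtain ⟨i, -, hilt⟩ := Finset.exists_lt_of_sum_lt hcard
  obtain ⟨u, humem, huI⟩ := h_exch (f i) (g i) (hfI i) (hgI i) hilt
  rw [Finset.mem_sdiff] at humem
  obtain ⟨hugi, hufi⟩ := humem
  by_cases husup : u ∈ Finset.univ.sup f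
  · -- u is elsewhere in f; move it and recurse
    rw [Finset.mem_sup] at husup
    obtain ⟨j, -, hufj⟩ := husup
    have hji : j ≠ i := fun h => hufi (h ▸ hufj)
    set f' : Fin ℓ → Finset U := fun k =>
      if k = i then insert u (f i) else if k = j then (f j).erase u else f k with hf'
    have hf'i : f' i = insert u (f i) := by simp [hf']
    have hf'j : f' j = (f j).erase u := by simp [hf', hji]
    have hf'o : ∀ k, k ≠ i → k ≠ j → f' k = f k := by
      intro k h1 h2; simp [hf', h1, h2]
    have hunotk : ∀ k, k ≠ j → u ∉ f k := by
      intro k hk hu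
      exact Finset.disjoint_left.mp (hfD k j hk) hu hufj
    have hugk : ∀ k, k ≠ i → u ∉ g k := by
      intro k hk hu
      exact Finset.disjoint_left.mp (hgD k i hk) hu hugi
    have hI' : ∀ k, Indep (f' k) := by
      intro k
      rcases eq_or_ne k i with rfl | h1
      · rw [hf'i]; exact huI
      rcases eq_or_ne k j with rfl | h2
      · rw [hf'j]; exact h_subset _ _ (Finset.erase_subset _ _) (hfI k)
      · rw [hf'o k h1 h2]; exact hfI k
    have hsub' : ∀ k, f' k ⊆ insert u (f k) := by
      intro k
      rcases eq_or_ne k i with rfl | h1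
      · rw [hf'i]
      rcases eq_or_ne k j with rfl | h2
      · rw [hf'j]; exact (Finset.erase_subset _ _).trans (Finset.subset_insert _ _)
      · rw [hf'o k h1 h2]; exact Finset.subset_insert _ _
    have hD' : ∀ k l, k ≠ l → Disjoint (f' k) (f' l) := by
      have key : ∀ k l, k ≠ l → l ≠ i → Disjoint (f' k) (f' l) := by
        intro k l hkl hli
        have hsubl : f' l ⊆ f l := by
          rcases eq_or_ne l j with rfl | h2
          · rw [hf'j]; exact Finset.erase_subset _ _
          · rw [hf'o l hli h2]
        rcases eq_or_ne k i with rfl | h1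
        · rw [hf'i, Finset.disjoint_insert_left]
          refine ⟨fun hu => ?_, Finset.disjoint_of_subset_right hsubl (hfD k l hkl)⟩
          rcases eq_or_ne l j with rfl | h2
          · rw [hf'j] at hu; exact Finset.notMem_erase u _ hu
          · rw [hf'o l hli h2] at hu; exact hunotk l h2 hu
        · have hsubk : f' k ⊆ f k := by
            rcases eq_or_ne k j with rfl | h2
            · rw [hf'j]; exact Finset.erase_subset _ _
            · rw [hf'o k h1 h2]
          exact Finset.disjoint_of_subset_left hsubk
            (Finset.disjoint_of_subset_right hsubl (hfD k l hkl))
      intro k l hkl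
      rcases eq_or_ne l i with rfl | hli
      · exact (key _ _ (Ne.symm hkl) hkl).symm
      · exact key k l hkl hli
    have hsup' : Finset.univ.sup f' = Finset.univ.sup f := by
      ext x
      simp only [Finset.mem_sup, Finset.mem_univ, true_and]
      constructor
      · rintro ⟨k, hx⟩
        rcases eq_or_ne k i with rfl | h1
        · rw [hf'i, Finset.mem_insert] at hx
          rcases hx with rfl | hx
          · exact ⟨j, hufj⟩
          · exact ⟨k, hx⟩
        rcases eq_or_ne k j with rfl | h2
        · rw [hf'j] at hx; exact ⟨k, Finset.erase_subset _ _ hx⟩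
        · rw [hf'o k h1 h2] at hx; exact ⟨k, hx⟩
      · rintro ⟨k, hx⟩
        rcases eq_or_ne k j with rfl | h2
        · rcases eq_or_ne x u with rfl | hxu
          · exact ⟨i, by rw [hf'i]; exact Finset.mem_insert_self _ _⟩
          · exact ⟨k, by rw [hf'j]; exact Finset.mem_erase.mpr ⟨hxu, hx⟩⟩
        rcases eq_or_ne k i with rfl | h1
        · exact ⟨k, by rw [hf'i]; exact Finset.mem_insert_of_mem hx⟩
        · exact ⟨k, by rw [hf'o k h1 h2]; exact hx⟩
    -- potential strictly increases
    have hpot_le : ∀ k, (f k ∩ g k).card ≤ (f' k ∩ g k).card := by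
      intro k
      rcases eq_or_ne k i with rfl | h1
      · apply Finset.card_le_card
        rw [hf'i]
        exact Finset.inter_subset_inter (Finset.subset_insert _ _) le_rfl
      rcases eq_or_ne k j with rfl | h2
      · apply Finset.card_le_card
        intro x hx
        rw [Finset.mem_inter] at hx
        rw [hf'j, Finset.mem_inter, Finset.mem_erase]
        exact ⟨⟨fun h => hugk k h1 (h ▸ hx.2), hx.1⟩, hx.2⟩
      · rw [hf'o k h1 h2]
    have hpot_lt : (f i ∩ g i).card < (f' i ∩ g i).card := by
      rw [hf'i, Finset.insert_inter_of_mem hugi,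
        Finset.card_insert_of_notMem (fun h => hufi (Finset.mem_inter.mp h).1)]
      omega
    have hsum_lt : ∑ k, (f k ∩ g k).card < ∑ k, (f' k ∩ g k).card :=
      Finset.sum_lt_sum (fun k _ => hpot_le k) ⟨i, Finset.mem_univ i, hpot_lt⟩
    have hbound : ∑ k, ((f' k) ∩ (g k)).card ≤ ℓ * Fintype.card U := by
      calc ∑ k, ((f' k) ∩ (g k)).card ≤ ∑ _k : Fin ℓ, Fintype.card U :=
            Finset.sum_le_sum (fun k _ => Finset.card_le_univ _)
        _ = ℓ * Fintype.card U := by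
            rw [Finset.sum_const, Finset.card_univ, Fintype.card_fin, smul_eq_mul]
    have hmeas : ℓ * Fintype.card U - ∑ k, ((f' k) ∩ (g k)).card < n := by omega
    obtain ⟨v, hv, ff, h1, h2, h3⟩ := ih _ hmeas f' g le_rfl hI' hD' hgI hgD
      (by rw [sup_card_eq f' hD', sup_card_eq g hgD]
          calc ∑ k, (f' k).card = (Finset.univ.sup f').card := (sup_card_eq f' hD').symm
            _ = (Finset.univ.sup f).card := by rw [hsup']
            _ = ∑ k, (f k).card := sup_card_eq f hfD
            _ < ∑ k, (g k).card := hcard)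
    rw [hsup'] at hv h3
    exact ⟨v, hv, ff, h1, h2, h3⟩
  · -- u is not in sup f: just add it to f i
    refine ⟨u, Finset.mem_sdiff.mpr ⟨Finset.mem_sup.mpr ⟨i, Finset.mem_univ i, hugi⟩, husup⟩,
      Function.update f i (insert u (f i)), ?_, ?_, ?_⟩
    · intro k
      rcases eq_or_ne k i with rfl | h1
      · rw [Function.update_self]; exact huI
      · rw [Function.update_of_ne h1]; exact hfI k
    · intro k l hkl
      have hnot : ∀ m, u ∉ f m := fun m hm =>
        husup (Finset.mem_sup.mpr ⟨m, Finset.mem_univ m, hm⟩)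
      rcases eq_or_ne k i with rfl | h1
      · rw [Function.update_self, Function.update_of_ne (fun h => hkl h.symm),
          Finset.disjoint_insert_left]
        exact ⟨hnot l, hfD k l hkl⟩
      rcases eq_or_ne l i with rfl | h2
      · rw [Function.update_self, Function.update_of_ne h1,
          Finset.disjoint_insert_right]
        exact ⟨hnot k, hfD k l hkl⟩
      · rw [Function.update_of_ne h1, Function.update_of_ne h2]
        exact hfD k l hkl
    · ext x
      simp only [Finset.mem_sup, Finset.mem_univ, true_and, Finset.mem_insert]
      constructor
      · rintro ⟨k, hx⟩
        rcases eq_or_ne k i with rfl | h1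
        · rw [Function.update_self, Finset.mem_insert] at hx
          rcases hx with rfl | hx
          · exact Or.inl rfl
          · exact Or.inr ⟨k, hx⟩
        · rw [Function.update_of_ne h1] at hx; exact Or.inr ⟨k, hx⟩
      · rintro (rfl | ⟨k, hx⟩)
        · exact ⟨i, by rw [Function.update_self]; exact Finset.mem_insert_self _ _⟩
        · rcases eq_or_ne k i with rfl | h1
          · exact ⟨k, by rw [Function.update_self]; exact Finset.mem_insert_of_mem hx⟩
          · exact ⟨k, by rw [Function.update_of_ne h1]; exact hx⟩

/-- For every matroid `M = (U, I)` and positive integer `ℓ`, the pair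
`M^ℓ = (U, I^ℓ)` is itself a matroid: the family `I^ℓ` is nonempty (contains `∅`),
downward closed (I1), and satisfies the exchange axiom (I2). -/
theorem union_is_matroid {U : Type*} [Fintype U] [DecidableEq U]
    (Indep : Finset U → Prop)
    (h_nonempty : Indep ∅)
    (h_subset : ∀ I J : Finset U, I ⊆ J → Indep J → Indep I)
    (h_exch : ∀ I J : Finset U, Indep I → Indep J → I.card < J.card →
      ∃ u ∈ J \ I, Indep (insert u I))
    (ℓ : ℕ) (hℓ : 0 < ℓ) :
    UnionIndep Indep ℓ ∅ ∧
    (∀ I J : Finset U, I ⊆ J → UnionIndep Indep ℓ J → UnionIndep Indep ℓ I) ∧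
    (∀ I J : Finset U, UnionIndep Indep ℓ I → UnionIndep Indep ℓ J →
      I.card < J.card → ∃ u ∈ J \ I, UnionIndep Indep ℓ (insert u I)) := by
  refine ⟨⟨fun _ => ∅, fun _ => h_nonempty, fun _ _ _ => Finset.disjoint_empty_left _, ?_⟩,
    ?_, ?_⟩
  · exact le_antisymm (Finset.sup_le fun _ _ => le_rfl) (Finset.empty_subset _)
  · rintro I J hIJ ⟨g, hgI, hgD, hgsup⟩
    refine ⟨fun k => g k ∩ I, fun k => h_subset _ _ (Finset.inter_subset_left) (hgI k),
      fun k l hkl => Finset.disjoint_of_subset_left Finset.inter_subset_left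
        (Finset.disjoint_of_subset_right Finset.inter_subset_left (hgD k l hkl)), ?_⟩
    ext x
    simp only [Finset.mem_sup, Finset.mem_univ, true_and, Finset.mem_inter]
    constructor
    · rintro ⟨k, -, hx⟩; exact hx
    · intro hx
      have : x ∈ Finset.univ.sup g := hgsup ▸ hIJ hx
      obtain ⟨k, -, hk⟩ := Finset.mem_sup.mp this
      exact ⟨k, hk, hx⟩
  · rintro I J ⟨f, hfI, hfD, rfl⟩ ⟨g, hgI, hgD, rfl⟩ hcard
    obtain ⟨u, hu, f', h1, h2, h3⟩ := union_aux Indep h_subset h_exch ℓ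
      (ℓ * Fintype.card U - ∑ i, ((f i) ∩ (g i)).card) f g le_rfl hfI hfD hgI hgD hcard
    exact ⟨u, hu, f', h1, h2, h3⟩
end

section
/- Let G = (U, V; E) be a bipartite graph, ω: U → ℤ≥0 a weight function, and k a positive integer. For every optimal (maximum-weight) base X of the k-fold union matroid (M_G)^k with respect to ω, there exists a maximum-weight matching N in the graph G^k with respect to the edge weights ω̄ (where ω̄({u, v(t)}) = ω(u)) such that X = ∂(N) ∩ U. -/
def IsMatching {U V : Type*} (N : Finset (U × V)) : Prop :=
  ∀ p ∈ N, ∀ q ∈ N, p.1 = q.1 ∨ p.2 = q.2 → p = q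

def TransIndep {U V : Type*} [DecidableEq U] (E : Finset (U × V)) (I : Finset U) : Prop :=
  ∃ N ⊆ E, IsMatching N ∧ N.image Prod.fst = I

def Ek {U V : Type*} [Fintype U] [Fintype V] [DecidableEq U] [DecidableEq V]
    (E : Finset (U × V)) (k : ℕ) : Finset (U × (V × Fin k)) :=
  Finset.univ.filter fun p => (p.1, p.2.1) ∈ E

/-- A base: an independent set of maximum cardinality. -/
def IsBase {U : Type*} (Indep : Finset U → Prop) (B : Finset U) : Prop :=
  Indep B ∧ ∀ I : Finset U, Indep I → I.card ≤ B.card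

/-- An optimal base with respect to the weight `ω`. -/
def IsOptBase {U : Type*} (Indep : Finset U → Prop) (ω : U → ℕ) (B : Finset U) : Prop :=
  IsBase Indep B ∧ ∀ B' : Finset U, IsBase Indep B' → ∑ u ∈ B', ω u ≤ ∑ u ∈ B, ω u

section HallSec
variable {α β : Type*} [DecidableEq α] [DecidableEq β]
def nbr (F : Finset (α × β)) (S : Finset α) : Finset β :=
  (F.filter fun p => p.1 ∈ S).image Prod.snd
def HallCond (F : Finset (α × β)) (I : Finset α) : Prop :=
  ∀ S ⊆ I, S.card ≤ (nbr F S).card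

lemma nbr_mono (F : Finset (α × β)) {S T : Finset α} (h : S ⊆ T) : nbr F S ⊆ nbr F T := by
  apply Finset.image_subset_image
  intro p hp
  simp only [Finset.mem_filter] at hp ⊢
  exact ⟨hp.1, h hp.2⟩

lemma nbr_union (F : Finset (α × β)) (S T : Finset α) :
    nbr F (S ∪ T) = nbr F S ∪ nbr F T := by
  unfold nbr
  rw [← Finset.image_union]
  congr 1
  ext p
  simp [Finset.mem_filter, Finset.mem_union]
  tauto

lemma nbr_inter_subset (F : Finset (α × β)) (S T : Finset α) :
    nbr F (S ∩ T) ⊆ nbr F S ∩ nbr F T := by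
  intro b hb
  simp only [Finset.mem_inter]
  exact ⟨nbr_mono F (Finset.inter_subset_left) hb, nbr_mono F (Finset.inter_subset_right) hb⟩

lemma nbr_empty (F : Finset (α × β)) : nbr F ∅ = ∅ := by
  simp [nbr]

lemma tight_union {F : Finset (α × β)} {I : Finset α} (hI : HallCond F I)
    {S T : Finset α} (hS : S ⊆ I) (hT : T ⊆ I)
    (htS : (nbr F S).card ≤ S.card) (htT : (nbr F T).card ≤ T.card) :
    (nbr F (S ∪ T)).card ≤ (S ∪ T).card := by
  have h1 : (nbr F (S ∪ T)).card + (nbr F S ∩ nbr F T).card = (nbr F S).card + (nbr F T).card := by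
    rw [nbr_union]
    exact Finset.card_union_add_card_inter _ _
  have h2 : (S ∩ T).card ≤ (nbr F (S ∩ T)).card :=
    hI _ ((Finset.inter_subset_left).trans hS)
  have h3 : (nbr F (S ∩ T)).card ≤ (nbr F S ∩ nbr F T).card :=
    Finset.card_le_card (nbr_inter_subset F S T)
  have h4 : (S ∪ T).card + (S ∩ T).card = S.card + T.card :=
    Finset.card_union_add_card_inter _ _
  omega

lemma tight_biUnion {F : Finset (α × β)} {I : Finset α} (hI : HallCond F I)
    {γ : Type*} [DecidableEq γ] (s : Finset γ) (g : γ → Finset α)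
    (hsub : ∀ c ∈ s, g c ⊆ I) (htight : ∀ c ∈ s, (nbr F (g c)).card ≤ (g c).card) :
    s.biUnion g ⊆ I ∧ (nbr F (s.biUnion g)).card ≤ (s.biUnion g).card := by
  classical
  induction s using Finset.induction_on with
  | empty => simp [nbr_empty]
  | insert _ _ hx ih =>
    rename_i a s'
    have ih' := ih (fun c hc => hsub c (Finset.mem_insert_of_mem hc))
      (fun c hc => htight c (Finset.mem_insert_of_mem hc))
    rw [Finset.biUnion_insert]
    refine ⟨Finset.union_subset (hsub a (Finset.mem_insert_self a s')) ih'.1, ?_⟩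
    exact tight_union hI (hsub a (Finset.mem_insert_self a s')) ih'.1
      (htight a (Finset.mem_insert_self a s')) ih'.2

lemma hall_aug {F : Finset (α × β)} {I J : Finset α} (hI : HallCond F I) (hJ : HallCond F J)
    (hlt : I.card < J.card) : ∃ x ∈ J, x ∉ I ∧ HallCond F (insert x I) := by
  classical
  by_contra hcon
  push_neg at hcon
  -- for each x ∈ J \ I, a violating set
  have H : ∀ x ∈ J \ I, ∃ T : Finset α, T ⊆ I ∧ (nbr F T).card ≤ T.card ∧ nbr F {x} ⊆ nbr F T := by
    intro x hx
    rw [Finset.mem_sdiff] at hx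
    obtain ⟨S, hSsub, hScard⟩ : ∃ S ⊆ insert x I, ¬ S.card ≤ (nbr F S).card := by
      have := hcon x hx.1 hx.2
      unfold HallCond at this
      push_neg at this
      obtain ⟨S, h1, h2⟩ := this
      exact ⟨S, h1, by omega⟩
    push_neg at hScard
    have hxS : x ∈ S := by
      by_contra hxS
      have : S ⊆ I := by
        intro a ha
        rcases Finset.mem_insert.1 (hSsub ha) with rfl | h
        · exact absurd ha hxS
        · exact h
      exact absurd (hI S this) (by omega)
    set T := S.erase x with hT
    have hTI : T ⊆ I := by
      intro a ha
      have ha' := Finset.mem_of_mem_erase ha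
      rcases Finset.mem_insert.1 (hSsub ha') with rfl | h
      · exact absurd rfl (Finset.ne_of_mem_erase ha)
      · exact h
    have hScardT : S.card = T.card + 1 := by
      rw [hT, Finset.card_erase_of_mem hxS]
      have : 0 < S.card := Finset.card_pos.2 ⟨x, hxS⟩
      omega
    have hSins : S = insert x T := by
      rw [hT, Finset.insert_erase hxS]
    have hNS : nbr F S = nbr F {x} ∪ nbr F T := by
      rw [hSins, Finset.insert_eq, nbr_union]
    have hTle : T.card ≤ (nbr F T).card := hI T hTI
    have hNTsub : nbr F T ⊆ nbr F S := nbr_mono F (by rw [hSins]; exact Finset.subset_insert _ _)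
    -- |N(S)| < |S| = |T| + 1 so |N(S)| ≤ |T| ≤ |N(T)| ≤ |N(S)| : equality
    have heq : nbr F T = nbr F S := by
      apply Finset.eq_of_subset_of_card_le hNTsub
      omega
    refine ⟨T, hTI, by rw [heq]; omega, ?_⟩
    rw [heq, hNS]
    exact Finset.subset_union_left
  choose T hT1 hT2 hT3 using H
  set A : Finset α := (J \ I).attach.biUnion (fun x => T x.1 x.2) with hA
  have hAtight := tight_biUnion hI (J \ I).attach (fun x => T x.1 x.2)
    (fun c _ => hT1 c.1 c.2) (fun c _ => hT2 c.1 c.2)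
  have hAI : A ⊆ I := hAtight.1
  have hAcard : (nbr F A).card ≤ A.card := hAtight.2
  -- the test set
  set J' : Finset α := (J ∩ A) ∪ (J \ I) with hJ'
  have hJ'sub : J' ⊆ J := by
    apply Finset.union_subset Finset.inter_subset_left (Finset.sdiff_subset)
  have hNJ' : nbr F J' ⊆ nbr F A := by
    rw [hJ', nbr_union]
    apply Finset.union_subset
    · exact nbr_mono F Finset.inter_subset_right
    · intro b hb
      simp only [nbr, Finset.mem_image, Finset.mem_filter] at hb
      obtain ⟨p, ⟨hpF, hp1⟩, rfl⟩ := hb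
      have hsingle : p.2 ∈ nbr F {p.1} := by
        simp only [nbr, Finset.mem_image, Finset.mem_filter, Finset.mem_singleton]
        exact ⟨p, ⟨hpF, rfl⟩, rfl⟩
      have := hT3 p.1 hp1 hsingle
      refine nbr_mono F ?_ this
      intro a ha
      rw [hA]
      rw [Finset.mem_biUnion]
      exact ⟨⟨p.1, hp1⟩, Finset.mem_attach _ _, ha⟩
  have hstep : J'.card ≤ A.card := le_trans (hJ J' hJ'sub)
    (le_trans (Finset.card_le_card hNJ') hAcard)
  have hdisj : Disjoint (J ∩ A) (J \ I) := by
    apply Finset.disjoint_left.2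
    intro a ha ha'
    rw [Finset.mem_inter] at ha
    rw [Finset.mem_sdiff] at ha'
    exact ha'.2 (hAI ha.2)
  have hJ'card : J'.card = (J ∩ A).card + (J \ I).card := Finset.card_union_of_disjoint hdisj
  have hAsplit : A.card = (A ∩ J).card + (A \ J).card := (Finset.card_inter_add_card_sdiff _ _).symm
  have hAJ : (A ∩ J) = (J ∩ A) := Finset.inter_comm _ _
  have hAdiffI : (A \ J).card ≤ (I \ J).card := Finset.card_le_card (Finset.sdiff_subset_sdiff hAI (le_refl _))
  have hIJ : I.card = (I ∩ J).card + (I \ J).card := (Finset.card_inter_add_card_sdiff _ _).symm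
  have hJI : J.card = (J ∩ I).card + (J \ I).card := (Finset.card_inter_add_card_sdiff _ _).symm
  have hcomm : (I ∩ J).card = (J ∩ I).card := by rw [Finset.inter_comm]
  rw [hAJ] at hAsplit
  omega

lemma matching_hall {F M : Finset (α × β)} (hMF : M ⊆ F) (hM : IsMatching M) :
    HallCond F (M.image Prod.fst) := by
  intro S hS
  classical
  have hinj : Set.InjOn Prod.snd ((M.filter fun p => p.1 ∈ S : Finset (α × β)) : Set (α × β)) := by
    intro p hp q hq hpq
    simp only [Finset.coe_filter, Set.mem_setOf_eq] at hp hq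
    exact hM p hp.1 q hq.1 (Or.inr hpq)
  have h1 : ((M.filter fun p => p.1 ∈ S).image Prod.snd).card
      = (M.filter fun p => p.1 ∈ S).card := Finset.card_image_of_injOn hinj
  have h2 : (M.filter fun p => p.1 ∈ S).image Prod.fst = S := by
    apply Finset.Subset.antisymm
    · intro a ha
      simp only [Finset.mem_image, Finset.mem_filter] at ha
      obtain ⟨p, ⟨_, hp⟩, rfl⟩ := ha; exact hp
    · intro a ha
      have := hS ha
      simp only [Finset.mem_image] at this ⊢
      obtain ⟨p, hp, rfl⟩ := this
      exact ⟨p, Finset.mem_filter.2 ⟨hp, ha⟩, rfl⟩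
  have h3 : S.card ≤ (M.filter fun p => p.1 ∈ S).card := by
    conv_lhs => rw [← h2]
    exact Finset.card_image_le
  have h4 : ((M.filter fun p => p.1 ∈ S).image Prod.snd) ⊆ nbr F S := by
    intro b hb
    simp only [nbr, Finset.mem_image, Finset.mem_filter] at hb ⊢
    obtain ⟨p, ⟨hpM, hpS⟩, rfl⟩ := hb
    exact ⟨p, ⟨hMF hpM, hpS⟩, rfl⟩
  calc S.card ≤ _ := h3
    _ = _ := h1.symm
    _ ≤ _ := Finset.card_le_card h4

lemma hall_matching {F : Finset (α × β)} {I : Finset α} (h : HallCond F I) :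
    ∃ M ⊆ F, IsMatching M ∧ M.image Prod.fst = I := by
  classical
  set t : {x // x ∈ I} → Finset β := fun x => nbr F {x.1} with ht
  have hall : ∀ s : Finset {x // x ∈ I}, s.card ≤ (s.biUnion t).card := by
    intro s
    have hsub : s.biUnion t = nbr F (s.image Subtype.val) := by
      ext b
      simp only [Finset.mem_biUnion, ht, nbr, Finset.mem_image, Finset.mem_filter,
        Finset.mem_singleton]
      constructor
      · rintro ⟨x, hx, p, ⟨hpF, hp1⟩, rfl⟩
        exact ⟨p, ⟨hpF, ⟨x, hx, hp1.symm⟩⟩, rfl⟩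
      · rintro ⟨p, ⟨hpF, x, hx, hxp⟩, rfl⟩
        exact ⟨x, hx, p, ⟨hpF, hxp.symm⟩, rfl⟩
    have hcard : s.card = (s.image Subtype.val).card :=
      (Finset.card_image_of_injective _ Subtype.val_injective).symm
    rw [hsub, hcard]
    exact h _ (by intro a ha; simp only [Finset.mem_image] at ha; obtain ⟨x, _, rfl⟩ := ha; exact x.2)
  obtain ⟨f, hfinj, hft⟩ := (Finset.all_card_le_biUnion_card_iff_exists_injective t).1 hall
  refine ⟨I.attach.image (fun x => (x.1, f x)), ?_, ?_, ?_⟩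
  · intro p hp
    simp only [Finset.mem_image, Finset.mem_attach, true_and] at hp
    obtain ⟨x, rfl⟩ := hp
    have := hft x
    simp only [ht, nbr, Finset.mem_image, Finset.mem_filter, Finset.mem_singleton] at this
    obtain ⟨q, ⟨hqF, hq1⟩, hq2⟩ := this
    have : q = (x.1, f x) := Prod.ext hq1 hq2
    rwa [← this]
  · intro p hp q hq hpq
    simp only [Finset.mem_image, Finset.mem_attach, true_and] at hp hq
    obtain ⟨x, rfl⟩ := hp
    obtain ⟨y, rfl⟩ := hq
    rcases hpq with h1 | h2
    · simp only at h1; rw [Subtype.ext h1]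
    · simp only at h2; rw [hfinj h2]
  · ext a
    simp only [Finset.mem_image, Finset.mem_attach, true_and]
    constructor
    · rintro ⟨p, ⟨x, rfl⟩, rfl⟩; exact x.2
    · intro ha; exact ⟨(a, f ⟨a, ha⟩), ⟨⟨a, ha⟩, rfl⟩, rfl⟩


lemma hall_extend {F : Finset (α × β)} {X : Finset α} (hX : HallCond F X) :
    ∀ n : ℕ, ∀ I : Finset α, HallCond F I → I.card + n = X.card →
    ∃ B : Finset α, I ⊆ B ∧ HallCond F B ∧ B.card = X.card := by
  intro n
  induction n with
  | zero => intro I hI hc; exact ⟨I, Finset.Subset.refl I, hI, by omega⟩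
  | succ m ih =>
    intro I hI hc
    obtain ⟨x, _, hxI, hins⟩ := hall_aug hI hX (by omega)
    obtain ⟨B, hIB, hB, hBc⟩ := ih (insert x I) hins
      (by rw [Finset.card_insert_of_notMem hxI]; omega)
    exact ⟨B, (Finset.subset_insert x I).trans hIB, hB, hBc⟩

lemma sum_matching {ω : α → ℕ} {M : Finset (α × β)} (hM : IsMatching M) :
    ∑ p ∈ M, ω p.1 = ∑ u ∈ M.image Prod.fst, ω u := by
  rw [Finset.sum_image]
  intro p hp q hq h
  exact hM p hp q hq (Or.inl h)
end HallSec


section Equiv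
variable {U V : Type*} [Fintype U] [Fintype V] [DecidableEq U] [DecidableEq V]

lemma unionIndep_iff_transIndep (E : Finset (U × V)) (k : ℕ) (I : Finset U) :
    UnionIndep (TransIndep E) k I ↔ TransIndep (Ek E k) I := by
  constructor
  · rintro ⟨f, hind, hdisj, hsup⟩
    choose Ni hNiE hNimatch hNiim using hind
    set M : Finset (U × (V × Fin k)) :=
      Finset.univ.biUnion (fun i : Fin k => (Ni i).image (fun p => (p.1, (p.2, i)))) with hM
    have hmem : ∀ q ∈ M, ∃ i : Fin k, ∃ p ∈ Ni i, q = (p.1, (p.2, i)) := by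
      intro q hq
      rw [hM, Finset.mem_biUnion] at hq
      obtain ⟨i, _, hq⟩ := hq
      rw [Finset.mem_image] at hq
      obtain ⟨p, hp, rfl⟩ := hq
      exact ⟨i, p, hp, rfl⟩
    refine ⟨M, ?_, ?_, ?_⟩
    · intro q hq
      obtain ⟨i, p, hp, rfl⟩ := hmem q hq
      simp only [Ek, Finset.mem_filter, Finset.mem_univ, true_and]
      exact hNiE i hp
    · intro q hq r hr h
      obtain ⟨i, p, hp, rfl⟩ := hmem q hq
      obtain ⟨j, s, hs, rfl⟩ := hmem r hr
      rcases h with h1 | h2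
      · simp only at h1
        by_cases hij : i = j
        · subst hij
          have := hNimatch i p hp s hs (Or.inl h1)
          subst this; rfl
        · exfalso
          have hp1 : p.1 ∈ f i := by rw [← hNiim i]; exact Finset.mem_image_of_mem _ hp
          have hs1 : s.1 ∈ f j := by rw [← hNiim j]; exact Finset.mem_image_of_mem _ hs
          rw [← h1] at hs1
          exact Finset.disjoint_left.1 (hdisj i j hij) hp1 hs1
      · simp only [Prod.mk.injEq] at h2
        obtain ⟨h2v, h2i⟩ := h2
        subst h2i
        have := hNimatch i p hp s hs (Or.inr h2v)
        subst this; rfl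
    · rw [← hsup]
      ext u
      simp only [Finset.mem_image]
      constructor
      · rintro ⟨q, hq, rfl⟩
        obtain ⟨i, p, hp, rfl⟩ := hmem q hq
        have : p.1 ∈ f i := by rw [← hNiim i]; exact Finset.mem_image_of_mem _ hp
        exact (Finset.mem_sup.2 ⟨i, Finset.mem_univ i, this⟩)
      · intro hu
        rw [Finset.mem_sup] at hu
        obtain ⟨i, _, hu⟩ := hu
        rw [← hNiim i, Finset.mem_image] at hu
        obtain ⟨p, hp, rfl⟩ := hu
        refine ⟨(p.1, (p.2, i)), ?_, rfl⟩
        rw [hM, Finset.mem_biUnion]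
        exact ⟨i, Finset.mem_univ i, Finset.mem_image_of_mem _ hp⟩
  · rintro ⟨M, hME, hMmatch, hMim⟩
    refine ⟨fun i => ((M.filter (fun q => q.2.2 = i)).image Prod.fst), ?_, ?_, ?_⟩
    · intro i
      refine ⟨(M.filter (fun q => q.2.2 = i)).image (fun q => (q.1, q.2.1)), ?_, ?_, ?_⟩
      · intro p hp
        rw [Finset.mem_image] at hp
        obtain ⟨q, hq, rfl⟩ := hp
        have := hME (Finset.mem_filter.1 hq).1
        simpa [Ek] using this
      · intro p hp q hq h
        rw [Finset.mem_image] at hp hq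
        obtain ⟨p', hp', rfl⟩ := hp
        obtain ⟨q', hq', rfl⟩ := hq
        rw [Finset.mem_filter] at hp' hq'
        have : p' = q' := by
          apply hMmatch p' hp'.1 q' hq'.1
          rcases h with h1 | h2
          · exact Or.inl h1
          · right
            have : p'.2 = (p'.2.1, p'.2.2) := rfl
            rw [Prod.ext_iff]
            exact ⟨h2, hp'.2.trans hq'.2.symm⟩
        rw [this]
      · rw [Finset.image_image]
        rfl
    · intro i j hij
      rw [Finset.disjoint_left]
      intro u hu hu'
      rw [Finset.mem_image] at hu hu'
      obtain ⟨p, hp, rfl⟩ := hu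
      obtain ⟨q, hq, h⟩ := hu'
      rw [Finset.mem_filter] at hp hq
      have : q = p := hMmatch q hq.1 p hp.1 (Or.inl h)
      subst this
      exact hij ((hp.2.symm.trans hq.2).symm).symm
    · rw [← hMim]
      ext u
      rw [Finset.mem_sup]
      simp only [Finset.mem_image, Finset.mem_filter]
      constructor
      · rintro ⟨i, _, p, ⟨hp, _⟩, rfl⟩
        exact ⟨p, hp, rfl⟩
      · rintro ⟨p, hp, rfl⟩
        exact ⟨p.2.2, Finset.mem_univ _, p, ⟨hp, rfl⟩, rfl⟩
end Equiv

/-- For every optimal base `X` of `(M_G)^k` with respect to `ω`, there is a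
maximum-weight matching `N` in `G^k` with respect to the edge weights
`ω̄({u, v(t)}) = ω u` such that `X = ∂(N) ∩ U`. -/
theorem optBase_realized_by_maxWeight_matching {U V : Type*} [Fintype U] [Fintype V]
    [DecidableEq U] [DecidableEq V]
    (E : Finset (U × V)) (ω : U → ℕ) (k : ℕ) (hk : 0 < k)
    (X : Finset U) (hX : IsOptBase (UnionIndep (TransIndep E) k) ω X) :
    ∃ N ⊆ Ek E k, IsMatching N ∧
      (∀ N' ⊆ Ek E k, IsMatching N' → ∑ p ∈ N', ω p.1 ≤ ∑ p ∈ N, ω p.1) ∧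
      N.image Prod.fst = X := by
  classical
  obtain ⟨⟨hXind, hXmax⟩, hXopt⟩ := hX
  have hXtrans : TransIndep (Ek E k) X := (unionIndep_iff_transIndep E k X).1 hXind
  obtain ⟨N, hNE, hNm, hNim⟩ := hXtrans
  refine ⟨N, hNE, hNm, ?_, hNim⟩
  intro N' hN'E hN'm
  rw [sum_matching hN'm, sum_matching hNm, hNim]
  set I := N'.image Prod.fst with hI
  have hItrans : TransIndep (Ek E k) I := ⟨N', hN'E, hN'm, rfl⟩
  have hIhall : HallCond (Ek E k) I := matching_hall hN'E hN'm
  have hXhall : HallCond (Ek E k) X := by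
    rw [← hNim]; exact matching_hall hNE hNm
  have hIcard : I.card ≤ X.card := hXmax I ((unionIndep_iff_transIndep E k I).2 hItrans)
  obtain ⟨B, hIB, hBhall, hBcard⟩ := hall_extend hXhall (X.card - I.card) I hIhall (by omega)
  have hBtrans : TransIndep (Ek E k) B := hall_matching hBhall
  have hBbase : IsBase (UnionIndep (TransIndep E) k) B := by
    refine ⟨(unionIndep_iff_transIndep E k B).2 hBtrans, ?_⟩
    intro I' hI'
    rw [hBcard]
    exact hXmax I' hI'
  calc ∑ u ∈ I, ω u ≤ ∑ u ∈ B, ω u := Finset.sum_le_sum_of_subset hIB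
    _ ≤ ∑ u ∈ X, ω u := hXopt B hBbase
end

section
/- With D = (W, A) defined as above, for every vertex v ∈ W and every u ∈ X_v ∩ B, we have φ(u) ∈ W. -/
/-- `X_v`: the set of vertices `u ∈ X = ∂(N) ∩ U` matched by `N` to some copy
`(v, t)` of `v`. -/
def Xv {U V : Type*} [DecidableEq U] [DecidableEq V] {k : ℕ}
    (N : Finset (U × (V × Fin k))) (v : V) : Finset U :=
  (N.filter fun p => p.2.1 = v).image Prod.fst

/-- `v ∈ W`: no vertex `u ∈ X_v ∩ B` has its `M`-partner `φ(u)` equal to `v`. -/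
def inW {U V : Type*} [DecidableEq U] [DecidableEq V] {k : ℕ}
    (N : Finset (U × (V × Fin k))) (M : Finset (U × V)) (v : V) : Prop :=
  ∀ u ∈ Xv N v, (u, v) ∉ M

/-- The arc `(v, v')` of the digraph `D = (W, A)`: both endpoints lie in `W`,
they are distinct, and some `u ∈ X_v ∩ B` has `φ(u) = v'`. -/
def Arc {U V : Type*} [DecidableEq U] [DecidableEq V] {k : ℕ}
    (N : Finset (U × (V × Fin k))) (M : Finset (U × V)) (v v' : V) : Prop :=
  inW N M v ∧ inW N M v' ∧ v ≠ v' ∧ ∃ u ∈ Xv N v, (u, v') ∈ M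

/-- For every `v ∈ W` and every `u ∈ X_v ∩ B`, the `M`-partner `φ(u)` lies in `W`. -/
theorem partner_in_W {U V : Type*} [Fintype U] [Fintype V]
    [DecidableEq U] [DecidableEq V]
    (E : Finset (U × V)) (k : ℕ) (hk : 0 < k)
    (N : Finset (U × (V × Fin k))) (hNE : N ⊆ Ek E k) (hN : IsMatching N)
    (M : Finset (U × V)) (hME : M ⊆ E) (hM : IsMatching M)
    (v : V) (hv : inW N M v)
    (u : U) (hu : u ∈ Xv N v) (huB : u ∈ M.image Prod.fst)
    (v' : V) (huv' : (u, v') ∈ M) :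
    inW N M v' := by
  intro u' hu' hu'M
  have hu'eq : u' = u := by
    have := hM (u', v') hu'M (u, v') huv' (Or.inr rfl)
    exact congrArg Prod.fst this
  subst hu'eq
  simp only [Xv, Finset.mem_image, Finset.mem_filter] at hu hu'
  obtain ⟨p, ⟨hpN, hpv⟩, hp1⟩ := hu
  obtain ⟨q, ⟨hqN, hqv⟩, hq1⟩ := hu'
  have hpq : p = q := hN p hpN q hqN (Or.inl (hp1.trans hq1.symm))
  have hvv' : v = v' := by rw [← hpv, hpq, hqv]
  subst hvv'
  exact hv u' (by simp only [Xv, Finset.mem_image, Finset.mem_filter]; exact ⟨p, ⟨hpN, hpv⟩, hp1⟩) hu'M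
end

section
/- Let u ∈ B \ X, and let P_u = (z_1, ..., z_ℓ) be a directed path in D from z_1 = φ(u) to a sink z_ℓ. Then for every vertex w ∈ X_{z_{ℓ-1}} ∪ X_{z_ℓ}, there exists an alternating path in G^k with respect to N from u to w. -/
def IsAltPath {U V : Type*} (F N : Finset (U × V)) (ℓ : ℕ)
    (x : ℕ → U) (y : ℕ → V) : Prop :=
  (∀ i j, i ≤ ℓ → j ≤ ℓ → x i = x j → i = j) ∧
  (∀ i j, i < ℓ → j < ℓ → y i = y j → i = j) ∧
  (∀ i < ℓ, (x i, y i) ∈ F ∧ (x i, y i) ∉ N ∧ (x (i + 1), y i) ∈ N) ∧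
  (∀ p ∈ N, p.1 ≠ x 0)

/-- Let `u ∈ B \ X` and let `(z 0, …, z ℓ)` be a directed path in `D` from
`z 0 = φ(u)` to a sink `z ℓ`. Then for every `w ∈ X_{z (ℓ-1)} ∪ X_{z ℓ}` there
is an alternating path in `G^k` with respect to `N` from `u` to `w`. -/
theorem altPath_to_sink {U V : Type*} [Fintype U] [Fintype V]
    [DecidableEq U] [DecidableEq V]
    (E : Finset (U × V)) (k : ℕ) (hk : 0 < k)
    (N : Finset (U × (V × Fin k))) (hNE : N ⊆ Ek E k) (hN : IsMatching N)
    (hXbase : IsBase (UnionIndep (TransIndep E) k) (N.image Prod.fst))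
    (M : Finset (U × V)) (hME : M ⊆ E) (hM : IsMatching M)
    (hBbase : IsBase (TransIndep E) (M.image Prod.fst))
    (u : U) (huB : u ∈ M.image Prod.fst) (huX : u ∉ N.image Prod.fst)
    (ℓ : ℕ) (hℓ : 1 ≤ ℓ) (z : ℕ → V)
    (hz0 : (u, z 0) ∈ M)
    (hzdist : ∀ i j, i ≤ ℓ → j ≤ ℓ → z i = z j → i = j)
    (hzW : ∀ i ≤ ℓ, inW N M (z i))
    (hzarc : ∀ i < ℓ, Arc N M (z i) (z (i + 1)))
    (hzsink : ∀ v' : V, ¬ Arc N M (z ℓ) v')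
    (w : U) (hw : w ∈ Xv N (z (ℓ - 1)) ∪ Xv N (z ℓ)) :
    ∃ (m : ℕ) (x : ℕ → U) (y : ℕ → V × Fin k),
      IsAltPath (Ek E k) N m x y ∧ x 0 = u ∧ x m = w := by
  classical
  -- partner of a covered vertex
  have hpartner : ∀ u' (v : V), u' ∈ Xv N v → ∃ q : V × Fin k, (u', q) ∈ N ∧ q.1 = v := by
    intro u' v hu'
    simp only [Xv, Finset.mem_image, Finset.mem_filter] at hu'
    obtain ⟨p, ⟨hpN, hpv⟩, hp1⟩ := hu'
    exact ⟨p.2, by rw [← hp1]; exact hpN, hpv⟩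
  have huniq : ∀ (u' : U) (q q' : V × Fin k), (u', q) ∈ N → (u', q') ∈ N → q = q' := by
    intro u' q q' h h'
    exact congrArg Prod.snd (hN _ h _ h' (Or.inl rfl))
  have hXv1 : ∀ (u' : U) (v v' : V), u' ∈ Xv N v → u' ∈ Xv N v' → v = v' := by
    intro u' v v' h h'
    obtain ⟨q, hqN, hq1⟩ := hpartner u' v h
    obtain ⟨q', hqN', hq1'⟩ := hpartner u' v' h'
    rw [← hq1, ← hq1', huniq u' q q' hqN hqN']
  have hcov : ∀ (u' : U) (v : V), u' ∈ Xv N v → u' ∈ N.image Prod.fst := by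
    intro u' v h
    obtain ⟨q, hqN, _⟩ := hpartner u' v h
    exact Finset.mem_image.mpr ⟨(u', q), hqN, rfl⟩
  -- witnesses for the arcs
  have harc : ∀ i, ∃ a : U, i < ℓ → a ∈ Xv N (z i) ∧ (a, z (i + 1)) ∈ M := by
    intro i
    by_cases h : i < ℓ
    · obtain ⟨_, _, _, a, haX, haM⟩ := hzarc i h
      exact ⟨a, fun _ => ⟨haX, haM⟩⟩
    · exact ⟨u, fun h' => absurd h' h⟩
  choose a ha using harc
  -- the index of the last z we use
  obtain ⟨j, hjℓ, hwj⟩ : ∃ j ≤ ℓ, w ∈ Xv N (z j) := by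
    rcases Finset.mem_union.mp hw with h | h
    · exact ⟨ℓ - 1, Nat.sub_le _ _, h⟩
    · exact ⟨ℓ, le_rfl, h⟩
  set x : ℕ → U := fun i => if i = 0 then u else if i ≤ j then a (i - 1) else w with hxdef
  have hX : ∀ i, 1 ≤ i → i ≤ j + 1 → x i ∈ Xv N (z (i - 1)) := by
    intro i h1 h2
    by_cases h : i ≤ j
    · have : x i = a (i - 1) := by simp [hxdef, show i ≠ 0 by omega, h]
      rw [this]
      exact (ha (i - 1) (by omega)).1
    · have hij : i = j + 1 := by omega
      have : x i = w := by simp [hxdef, show i ≠ 0 by omega, h]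
      rw [this, hij]
      simpa using hwj
  have hMx : ∀ i ≤ j, (x i, z i) ∈ M := by
    intro i hi
    by_cases h : i = 0
    · subst h; simpa [hxdef] using hz0
    · have hx : x i = a (i - 1) := by simp [hxdef, h, hi]
      have := (ha (i - 1) (by omega)).2
      have heq : i - 1 + 1 = i := by omega
      rw [heq] at this
      rw [hx]; exact this
  -- the y function
  have hY : ∀ i, ∃ q : V × Fin k, i ≤ j → (x (i + 1), q) ∈ N ∧ q.1 = z i := by
    intro i
    by_cases h : i ≤ j
    · have hx : x (i + 1) ∈ Xv N (z i) := by
        simpa using hX (i + 1) (by omega) (by omega)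
      obtain ⟨q, hq⟩ := hpartner _ _ hx
      exact ⟨q, fun _ => hq⟩
    · exact ⟨(z 0, ⟨0, hk⟩), fun h' => absurd h' h⟩
  choose y hy using hY
  refine ⟨j + 1, x, y, ⟨?_, ?_, ?_, ?_⟩, by simp [hxdef], by
    simp [hxdef, Nat.not_succ_le_self]⟩
  · -- x injective on [0, j+1]
    intro i i' hi hi' heq
    by_cases h0 : i = 0 <;> by_cases h0' : i' = 0
    · omega
    · exfalso
      apply huX
      have := hX i' (by omega) hi'
      rw [← heq, h0] at this
      have : u ∈ Xv N (z (i' - 1)) := by simpa [hxdef] using this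
      exact hcov _ _ this
    · exfalso
      apply huX
      have := hX i (by omega) hi
      rw [heq, h0'] at this
      have : u ∈ Xv N (z (i - 1)) := by simpa [hxdef] using this
      exact hcov _ _ this
    · have h1 := hX i (by omega) hi
      have h2 := hX i' (by omega) hi'
      rw [heq] at h1
      have := hXv1 _ _ _ h1 h2
      have := hzdist (i - 1) (i' - 1) (by omega) (by omega) this
      omega
  · -- y injective on [0, j]
    intro i i' hi hi' heq
    have h1 := (hy i (by omega)).2
    have h2 := (hy i' (by omega)).2
    rw [heq] at h1
    exact hzdist i i' (by omega) (by omega) (h1 ▸ h2.symm).symm |>.symm ▸ rfl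
  · -- edges
    intro i hi
    have hij : i ≤ j := by omega
    refine ⟨?_, ?_, (hy i hij).1⟩
    · simp only [Ek, Finset.mem_filter, Finset.mem_univ, true_and]
      have := hME (hMx i hij)
      rw [(hy i hij).2]
      exact this
    · intro hmem
      by_cases h0 : i = 0
      · apply huX
        subst h0
        have hx0 : x 0 = u := by simp [hxdef]
        rw [hx0] at hmem
        exact Finset.mem_image.mpr ⟨(u, y 0), hmem, rfl⟩
      · have hxi := hX i (by omega) (by omega)
        obtain ⟨q, hqN, hq1⟩ := hpartner _ _ hxi
        have hqy : y i = q := huniq _ _ _ hmem hqN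
        have : z i = z (i - 1) := by rw [← (hy i hij).2, hqy, hq1]
        have := hzdist i (i - 1) (by omega) (by omega) this
        omega
  · intro p hp
    simp only [hxdef, if_pos rfl]
    intro h
    exact huX (Finset.mem_image.mpr ⟨p, hp, h⟩)
end

section
/- In the setting of the proof of the main theorem, for every vertex u ∈ B \ X, all k copies q_u(1), ..., q_u(k) of the sink q_u associated with u are covered by the maximum-weight matching N in G^k; consequently |X_{q_u}| = k. -/
/-- Any matching in `G^k` projects to an independent set of the `k`-fold union
of the transversal matroid of `G`. -/
lemma unionIndep_of_matching {U V : Type*} [Fintype U] [Fintype V]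
    [DecidableEq U] [DecidableEq V] {E : Finset (U × V)} {k : ℕ}
    {N : Finset (U × (V × Fin k))} (hNE : N ⊆ Ek E k) (hN : IsMatching N) :
    UnionIndep (TransIndep E) k (N.image Prod.fst) := by
  refine ⟨fun t => (N.filter fun p => p.2.2 = t).image Prod.fst, ?_, ?_, ?_⟩
  · intro t
    refine ⟨(N.filter fun p => p.2.2 = t).image (fun p => (p.1, p.2.1)), ?_, ?_, ?_⟩
    · intro q hq
      simp only [Finset.mem_image, Finset.mem_filter] at hq
      obtain ⟨p, ⟨hp, _⟩, rfl⟩ := hq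
      have := hNE hp
      simpa [Ek] using this
    · intro a ha b hb hab
      simp only [Finset.mem_image, Finset.mem_filter] at ha hb
      obtain ⟨p, ⟨hp, hpt⟩, rfl⟩ := ha
      obtain ⟨q, ⟨hq, hqt⟩, rfl⟩ := hb
      have hpq : p = q := by
        rcases hab with h | h
        · exact hN p hp q hq (Or.inl h)
        · exact hN p hp q hq (Or.inr (Prod.ext h (hpt.trans hqt.symm)))
      rw [hpq]
    · rw [Finset.image_image]
      rfl
  · intro i j hij
    rw [Finset.disjoint_left]
    intro x hxi hxj
    simp only [Finset.mem_image, Finset.mem_filter] at hxi hxj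
    obtain ⟨p, ⟨hp, hpi⟩, rfl⟩ := hxi
    obtain ⟨q, ⟨hq, hqj⟩, h1⟩ := hxj
    have : q = p := hN q hq p hp (Or.inl h1)
    subst this
    exact hij (hpi ▸ hqj ▸ rfl)
  · ext x
    simp only [Finset.mem_sup, Finset.mem_image, Finset.mem_filter]
    constructor
    · rintro ⟨t, -, p, ⟨hp, -⟩, h⟩
      exact ⟨p, hp, h⟩
    · rintro ⟨p, hp, h⟩
      exact ⟨p.2.2, Finset.mem_univ _, p, ⟨hp, rfl⟩, h⟩

/-- For every `u ∈ B \ X`, all `k` copies `(q_u, t)` of the sink `q_u = z ℓ`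
associated with `u` are covered by the maximum-weight matching `N` in `G^k`;
consequently `|X_{q_u}| = k`. -/
theorem sink_copies_covered {U V : Type*} [Fintype U] [Fintype V]
    [DecidableEq U] [DecidableEq V]
    (E : Finset (U × V)) (ω : U → ℕ) (k : ℕ) (hk : 0 < k)
    (N : Finset (U × (V × Fin k))) (hNE : N ⊆ Ek E k) (hN : IsMatching N)
    (hNmax : ∀ N' ⊆ Ek E k, IsMatching N' → ∑ p ∈ N', ω p.1 ≤ ∑ p ∈ N, ω p.1)
    (hXopt : IsOptBase (UnionIndep (TransIndep E) k) ω (N.image Prod.fst))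
    (M : Finset (U × V)) (hME : M ⊆ E) (hM : IsMatching M)
    (hBbase : IsBase (TransIndep E) (M.image Prod.fst))
    (u : U) (huB : u ∈ M.image Prod.fst) (huX : u ∉ N.image Prod.fst)
    (ℓ : ℕ) (z : ℕ → V)
    (hz0 : (u, z 0) ∈ M)
    (hzdist : ∀ i j, i ≤ ℓ → j ≤ ℓ → z i = z j → i = j)
    (hzW : ∀ i ≤ ℓ, inW N M (z i))
    (hzarc : ∀ i < ℓ, Arc N M (z i) (z (i + 1)))
    (hzsink : ∀ v' : V, ¬ Arc N M (z ℓ) v') :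
    (∀ t : Fin k, ∃ p ∈ N, p.2 = (z ℓ, t)) ∧ (Xv N (z ℓ)).card = k := by
  have h1 : ∀ t : Fin k, ∃ p ∈ N, p.2 = (z ℓ, t) := by
    by_contra hcon
    push_neg at hcon
    obtain ⟨t0, ht0⟩ := hcon
    -- key induction: for each `i ≤ ℓ`, there is a matching agreeing with `N` in
    -- image and on vertices `z j` for `j < i`, with a free copy of `z i`.
    have key : ∀ d i, i + d = ℓ →
        ∃ N', N' ⊆ Ek E k ∧ IsMatching N' ∧
          N'.image Prod.fst = N.image Prod.fst ∧
          (∃ t : Fin k, ∀ p ∈ N', p.2 ≠ (z i, t)) ∧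
          (∀ j, j < i → ∀ p : U × (V × Fin k), p.2.1 = z j → (p ∈ N' ↔ p ∈ N)) := by
      intro d
      induction d with
      | zero =>
        intro i hi
        have hiℓ : i = ℓ := by omega
        subst hiℓ
        exact ⟨N, hNE, hN, rfl, ⟨t0, ht0⟩, fun j hj q _ => Iff.rfl⟩
      | succ d ih =>
        intro i hi
        obtain ⟨N', hN'E, hN'm, hN'img, ⟨t, ht⟩, hinv⟩ := ih (i + 1) (by omega)
        have hiℓ : i < ℓ := by omega
        obtain ⟨_, _, _, w, hwXv, hwM⟩ := hzarc i hiℓ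
        simp only [Xv, Finset.mem_image, Finset.mem_filter] at hwXv
        obtain ⟨p, ⟨hpN, hp2⟩, hp1⟩ := hwXv
        have hpN' : p ∈ N' := (hinv i (by omega) p hp2).2 hpN
        set e : U × (V × Fin k) := (w, (z (i + 1), t)) with he
        have hw1 : ∀ q ∈ N'.erase p, q.1 ≠ w := by
          intro q hq h
          have hq' := Finset.mem_of_mem_erase hq
          have : q = p := hN'm q hq' p hpN' (Or.inl (h.trans hp1.symm))
          exact Finset.ne_of_mem_erase hq this
        have hw2 : ∀ q ∈ N'.erase p, q.2 ≠ (z (i + 1), t) := by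
          intro q hq h
          exact ht q (Finset.mem_of_mem_erase hq) h
        refine ⟨insert e (N'.erase p), ?_, ?_, ?_, ⟨p.2.2, ?_⟩, ?_⟩
        · intro q hq
          rcases Finset.mem_insert.1 hq with rfl | hq'
          · simp only [Ek, Finset.mem_filter, Finset.mem_univ, true_and]
            exact hME hwM
          · exact hN'E (Finset.mem_of_mem_erase hq')
        · intro a ha b hb hab
          rcases Finset.mem_insert.1 ha with rfl | ha' <;>
            rcases Finset.mem_insert.1 hb with rfl | hb'
          · rfl
          · rcases hab with h | h
            · exact absurd h.symm (hw1 b hb')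
            · exact absurd h.symm (hw2 b hb')
          · rcases hab with h | h
            · exact absurd h (hw1 a ha')
            · exact absurd h (hw2 a ha')
          · exact hN'm a (Finset.mem_of_mem_erase ha') b (Finset.mem_of_mem_erase hb') hab
        · rw [← hN'img]
          apply Finset.Subset.antisymm
          · intro x hx
            simp only [Finset.mem_image, Finset.mem_insert] at hx ⊢
            obtain ⟨q, hq, rfl⟩ := hx
            rcases hq with rfl | hq
            · exact ⟨p, hpN', hp1⟩
            · exact ⟨q, Finset.mem_of_mem_erase hq, rfl⟩
          · intro x hx
            simp only [Finset.mem_image, Finset.mem_insert] at hx ⊢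
            obtain ⟨q, hq, rfl⟩ := hx
            by_cases hqp : q = p
            · subst hqp
              exact ⟨e, Or.inl rfl, hp1.symm⟩
            · exact ⟨q, Or.inr (Finset.mem_erase.2 ⟨hqp, hq⟩), rfl⟩
        · intro q hq h
          rcases Finset.mem_insert.1 hq with rfl | hq'
          · have h' : z (i + 1) = z i := congrArg Prod.fst h
            have := hzdist (i + 1) i (by omega) (by omega) h'
            omega
          · have hp2' : p.2 = (z i, p.2.2) := Prod.ext hp2 rfl
            have : q = p := hN'm q (Finset.mem_of_mem_erase hq') p hpN'
              (Or.inr (h.trans hp2'.symm))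
            exact Finset.ne_of_mem_erase hq' this
        · intro j hj q hq2
          have hne1 : q ≠ e := by
            intro h
            rw [h] at hq2
            have := hzdist (i + 1) j (by omega) (by omega) hq2
            omega
          have hne2 : q ≠ p := by
            intro h
            rw [h, hp2] at hq2
            have := hzdist i j (by omega) (by omega) hq2
            omega
          constructor
          · intro h
            rcases Finset.mem_insert.1 h with h | h
            · exact absurd h hne1
            · exact (hinv j (by omega) q hq2).1 (Finset.mem_of_mem_erase h)
          · intro h
            exact Finset.mem_insert_of_mem
              (Finset.mem_erase.2 ⟨hne2, (hinv j (by omega) q hq2).2 h⟩)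
    obtain ⟨N', hN'E, hN'm, hN'img, ⟨t, ht⟩, _⟩ := key ℓ 0 (by omega)
    have huX' : u ∉ N'.image Prod.fst := by rw [hN'img]; exact huX
    set e : U × (V × Fin k) := (u, (z 0, t)) with he
    have hN₂E : insert e N' ⊆ Ek E k := by
      intro q hq
      rcases Finset.mem_insert.1 hq with rfl | hq'
      · simp only [Ek, Finset.mem_filter, Finset.mem_univ, true_and]
        exact hME hz0
      · exact hN'E hq'
    have hw1 : ∀ q ∈ N', q.1 ≠ u := by
      intro q hq h
      exact huX' (h ▸ Finset.mem_image_of_mem Prod.fst hq)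
    have hN₂m : IsMatching (insert e N') := by
      intro a ha b hb hab
      rcases Finset.mem_insert.1 ha with rfl | ha' <;>
        rcases Finset.mem_insert.1 hb with rfl | hb'
      · rfl
      · rcases hab with h | h
        · exact absurd h.symm (hw1 b hb')
        · exact absurd h.symm (ht b hb')
      · rcases hab with h | h
        · exact absurd h (hw1 a ha')
        · exact absurd h (ht a ha')
      · exact hN'm a ha' b hb' hab
    have hind := unionIndep_of_matching hN₂E hN₂m
    have hle := hXopt.1.2 _ hind
    rw [Finset.image_insert] at hle
    have hcard : (insert e.1 (N'.image Prod.fst)).card = (N'.image Prod.fst).card + 1 :=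
      Finset.card_insert_of_notMem huX'
    rw [hN'img] at hcard
    rw [hN'img] at hle
    omega
  refine ⟨h1, ?_⟩
  have hfc : (N.filter fun p => p.2.1 = z ℓ).card = k := by
    have hb : (N.filter fun p => p.2.1 = z ℓ).card = (Finset.univ : Finset (Fin k)).card := by
      apply Finset.card_bij (fun p _ => p.2.2)
      · intro a _
        exact Finset.mem_univ _
      · intro a ha b hb h
        simp only [Finset.mem_filter] at ha hb
        exact hN a ha.1 b hb.1 (Or.inr (Prod.ext (ha.2.trans hb.2.symm) h))
      · intro t _
        obtain ⟨p, hp, hpt⟩ := h1 t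
        refine ⟨p, Finset.mem_filter.2 ⟨hp, by rw [hpt]⟩, by rw [hpt]⟩
    rw [hb, Finset.card_univ, Fintype.card_fin]
  rw [Xv, Finset.card_image_of_injOn, hfc]
  intro a ha b hb h
  simp only [Finset.mem_coe, Finset.mem_filter] at ha hb
  exact hN a ha.1 b hb.1 (Or.inl h)
end

section
/- In the setting of the proof of the main theorem, for every vertex u ∈ B \ X and every vertex w ∈ X_{q_u}, we have ω(u) ≤ ω(w). -/
/-- For every `u ∈ B \ X` and every `w ∈ X_{q_u}` (where `q_u = z ℓ` is the
sink of `D` reached from `φ(u)` along the path `z`), we have `ω u ≤ ω w`. -/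
theorem weight_le_sink_weights {U V : Type*} [Fintype U] [Fintype V]
    [DecidableEq U] [DecidableEq V]
    (E : Finset (U × V)) (ω : U → ℕ) (k : ℕ) (hk : 0 < k)
    (N : Finset (U × (V × Fin k))) (hNE : N ⊆ Ek E k) (hN : IsMatching N)
    (hNmax : ∀ N' ⊆ Ek E k, IsMatching N' → ∑ p ∈ N', ω p.1 ≤ ∑ p ∈ N, ω p.1)
    (hXopt : IsOptBase (UnionIndep (TransIndep E) k) ω (N.image Prod.fst))
    (M : Finset (U × V)) (hME : M ⊆ E) (hM : IsMatching M)
    (hBbase : IsBase (TransIndep E) (M.image Prod.fst))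
    (u : U) (huB : u ∈ M.image Prod.fst) (huX : u ∉ N.image Prod.fst)
    (ℓ : ℕ) (z : ℕ → V)
    (hz0 : (u, z 0) ∈ M)
    (hzdist : ∀ i j, i ≤ ℓ → j ≤ ℓ → z i = z j → i = j)
    (hzW : ∀ i ≤ ℓ, inW N M (z i))
    (hzarc : ∀ i < ℓ, Arc N M (z i) (z (i + 1)))
    (hzsink : ∀ v' : V, ¬ Arc N M (z ℓ) v')
    (w : U) (hw : w ∈ Xv N (z ℓ)) :
    ω u ≤ ω w := by
  classical
  -- choose the left vertices a i and copy indices t i along the path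
  have h1 : ∀ i : ℕ, ∃ a : U, ∃ t : Fin k,
      (i ≤ ℓ → (a, (z i, t)) ∈ N) ∧ (i < ℓ → (a, z (i+1)) ∈ M) ∧ (ℓ ≤ i → a = w) := by
    intro i
    rcases lt_trichotomy i ℓ with hi | hi | hi
    · obtain ⟨-, -, -, u', hu', huM⟩ := hzarc i hi
      simp only [Xv, Finset.mem_image, Finset.mem_filter] at hu'
      obtain ⟨⟨p1, p2, p3⟩, ⟨hpN, hpz⟩, hpu⟩ := hu'
      simp only at hpz hpu
      subst hpz; subst hpu
      exact ⟨p1, p3, fun _ => hpN, fun _ => huM, fun h => absurd hi (by omega)⟩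
    · subst hi
      simp only [Xv, Finset.mem_image, Finset.mem_filter] at hw
      obtain ⟨⟨p1, p2, p3⟩, ⟨hpN, hpz⟩, hpu⟩ := hw
      simp only at hpz hpu
      subst hpz; subst hpu
      exact ⟨p1, p3, fun _ => hpN, fun h => absurd h (lt_irrefl _), fun _ => rfl⟩
    · exact ⟨w, ⟨0, hk⟩, fun h => absurd h (by omega), fun h => absurd h (by omega),
        fun _ => rfl⟩
  choose a t hAN hAM hAw using h1
  have haw : a ℓ = w := hAw ℓ le_rfl
  have haX : ∀ i, i ≤ ℓ → a i ∈ N.image Prod.fst := fun i hi =>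
    Finset.mem_image.2 ⟨_, hAN i hi, rfl⟩
  have hua : ∀ i, i ≤ ℓ → u ≠ a i := by
    intro i hi h; exact huX (h ▸ haX i hi)
  have hainj : ∀ i j, i ≤ ℓ → j ≤ ℓ → a i = a j → i = j := by
    intro i j hi hj h
    have := hN _ (hAN i hi) _ (hAN j hj) (Or.inl h)
    have hz : z i = z j := congrArg (fun p => p.2.1) this
    exact hzdist i j hi hj hz
  -- the sets to swap
  set S : Finset (U × (V × Fin k)) :=
    (Finset.range (ℓ+1)).image (fun i => (a i, (z i, t i))) with hS
  set T : Finset (U × (V × Fin k)) :=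
    insert (u, (z 0, t 0)) ((Finset.range ℓ).image fun i => (a i, (z (i+1), t (i+1)))) with hT
  have hSN : S ⊆ N := by
    intro p hp
    simp only [hS, Finset.mem_image, Finset.mem_range] at hp
    obtain ⟨i, hi, rfl⟩ := hp
    exact hAN i (by omega)
  have hTE : T ⊆ Ek E k := by
    intro p hp
    simp only [hT, Finset.mem_insert, Finset.mem_image, Finset.mem_range] at hp
    rcases hp with rfl | ⟨i, hi, rfl⟩
    · simp only [Ek, Finset.mem_filter, Finset.mem_univ, true_and]
      exact hME hz0
    · simp only [Ek, Finset.mem_filter, Finset.mem_univ, true_and]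
      exact hME (hAM i hi)
  set N' : Finset (U × (V × Fin k)) := (N \ S) ∪ T with hN'
  have hTnotN : ∀ p ∈ T, p ∉ N := by
    intro p hp hpN
    simp only [hT, Finset.mem_insert, Finset.mem_image, Finset.mem_range] at hp
    rcases hp with rfl | ⟨i, hi, rfl⟩
    · exact huX (Finset.mem_image.2 ⟨_, hpN, rfl⟩)
    · have := hN _ hpN _ (hAN i (by omega)) (Or.inl rfl)
      have hz : z (i+1) = z i := congrArg (fun p => p.2.1) this
      exact absurd (hzdist _ _ (by omega) (by omega) hz) (by omega)
  have hdisj : Disjoint (N \ S) T := by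
    rw [Finset.disjoint_right]
    intro p hp hp'
    exact hTnotN p hp (Finset.mem_sdiff.1 hp').1
  have hN'E : N' ⊆ Ek E k := by
    intro p hp
    rcases Finset.mem_union.1 hp with hp | hp
    · exact hNE (Finset.mem_sdiff.1 hp).1
    · exact hTE hp
  -- every N-edge touching a i (i ≤ ℓ) is the canonical one
  have huniq1 : ∀ p ∈ N, ∀ i, i ≤ ℓ → p.1 = a i → p = (a i, (z i, t i)) :=
    fun p hp i hi h => hN p hp _ (hAN i hi) (Or.inl h)
  have huniq2 : ∀ p ∈ N, ∀ i, i ≤ ℓ → p.2 = (z i, t i) → p = (a i, (z i, t i)) :=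
    fun p hp i hi h => hN p hp _ (hAN i hi) (Or.inr h)
  -- a T edge and an (N \ S) edge never share an endpoint
  have hcross : ∀ p ∈ N \ S, ∀ q ∈ T, ¬ (p.1 = q.1 ∨ p.2 = q.2) := by
    intro p hp q hq hshare
    obtain ⟨hpN, hpS⟩ := Finset.mem_sdiff.1 hp
    have hmemS : ∀ i, i ≤ ℓ → p = (a i, (z i, t i)) → False := by
      intro i hi h
      exact hpS (Finset.mem_image.2 ⟨i, Finset.mem_range.2 (by omega), h.symm⟩)
    simp only [hT, Finset.mem_insert, Finset.mem_image, Finset.mem_range] at hq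
    rcases hq with rfl | ⟨i, hi, rfl⟩
    · rcases hshare with h | h
      · exact huX (Finset.mem_image.2 ⟨p, hpN, h⟩)
      · exact hmemS 0 (Nat.zero_le _) (huniq2 p hpN 0 (Nat.zero_le _) h)
    · rcases hshare with h | h
      · exact hmemS i (by omega) (huniq1 p hpN i (by omega) h)
      · exact hmemS (i+1) (by omega) (huniq2 p hpN (i+1) (by omega) h)
  have hN'match : IsMatching N' := by
    intro p hp q hq hshare
    rcases Finset.mem_union.1 hp with hp | hp <;> rcases Finset.mem_union.1 hq with hq | hq
    · exact hN p (Finset.mem_sdiff.1 hp).1 q (Finset.mem_sdiff.1 hq).1 hshare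
    · exact absurd hshare (hcross p hp q hq)
    · exact absurd (hshare.imp Eq.symm Eq.symm) (hcross q hq p hp)
    · -- both in T
      simp only [hT, Finset.mem_insert, Finset.mem_image, Finset.mem_range] at hp hq
      rcases hp with rfl | ⟨i, hi, rfl⟩ <;> rcases hq with rfl | ⟨j, hj, rfl⟩
      · rfl
      · rcases hshare with h | h
        · exact absurd h (hua j (by omega))
        · have hz : z 0 = z (j+1) := congrArg Prod.fst h
          exact absurd (hzdist 0 (j+1) (Nat.zero_le _) (by omega) hz) (by omega)
      · rcases hshare with h | h
        · exact absurd h.symm (hua i (by omega))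
        · have hz : z (i+1) = z 0 := congrArg Prod.fst h
          exact absurd (hzdist (i+1) 0 (by omega) (Nat.zero_le _) hz) (by omega)
      · rcases hshare with h | h
        · have := hainj i j (by omega) (by omega) h
          subst this; rfl
        · have hz : z (i+1) = z (j+1) := congrArg Prod.fst h
          have := hzdist (i+1) (j+1) (by omega) (by omega) hz
          have : i = j := by omega
          subst this; rfl
  -- sums
  have hsumS : ∑ p ∈ S, ω p.1 = ∑ i ∈ Finset.range (ℓ+1), ω (a i) := by
    rw [hS, Finset.sum_image]
    intro i hi j hj h
    have hz : z i = z j := congrArg (fun p => p.2.1) h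
    have hi' := Finset.mem_range.1 hi
    have hj' := Finset.mem_range.1 hj
    exact hzdist i j (by omega) (by omega) hz
  have hsumT : ∑ p ∈ T, ω p.1 = ω u + ∑ i ∈ Finset.range ℓ, ω (a i) := by
    rw [hT, Finset.sum_insert, Finset.sum_image]
    · intro i hi j hj h
      have hz : z (i+1) = z (j+1) := congrArg (fun p => p.2.1) h
      have hi' := Finset.mem_range.1 hi
      have hj' := Finset.mem_range.1 hj
      have := hzdist (i+1) (j+1) (by omega) (by omega) hz
      omega
    · intro hmem
      obtain ⟨i, hi, h⟩ := Finset.mem_image.1 hmem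
      have hi' := Finset.mem_range.1 hi
      exact hua i (by omega) (congrArg Prod.fst h.symm)
  have hsum : ∑ p ∈ N', ω p.1 + ∑ p ∈ S, ω p.1
      = ∑ p ∈ N, ω p.1 + ∑ p ∈ T, ω p.1 := by
    rw [hN', Finset.sum_union hdisj]
    have h2 : ∑ p ∈ N \ S, ω p.1 + ∑ p ∈ S, ω p.1 = ∑ p ∈ N, ω p.1 :=
      Finset.sum_sdiff hSN
    omega
  have hle := hNmax N' hN'E hN'match
  have hfin : ∑ p ∈ T, ω p.1 ≤ ∑ p ∈ S, ω p.1 := by omega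
  rw [hsumS, Finset.sum_range_succ, haw, hsumT] at hfin
  omega
end

section
/- In the setting of the proof of the main theorem, enumerate B \ X as u_1, ..., u_m and set X_i := X_{q_{u_i}}. Then for every choice (w_1, ..., w_m) ∈ X_1 × ... × X_m, the set (B ∩ X) ∪ {w_1, ..., w_m} is independent in the transversal matroid M_G. -/
/-- For each `u ∈ B \ X` let `z u 0, …, z u (L u)` be a directed path in `D`
from `φ(u)` to a sink `q_u = z u (L u)`, these paths being vertex-disjoint
across distinct `u`. Then for every choice `c u ∈ X_{q_u}` (`u ∈ B \ X`), the
set `(B ∩ X) ∪ (c '' (B \ X))` is independent in the transversal matroid `M_G`. -/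
theorem choice_from_sinks_indep {U V : Type*} [Fintype U] [Fintype V]
    [DecidableEq U] [DecidableEq V]
    (E : Finset (U × V)) (k : ℕ) (hk : 0 < k)
    (N : Finset (U × (V × Fin k))) (hNE : N ⊆ Ek E k) (hN : IsMatching N)
    (hXbase : IsBase (UnionIndep (TransIndep E) k) (N.image Prod.fst))
    (M : Finset (U × V)) (hME : M ⊆ E) (hM : IsMatching M)
    (hBbase : IsBase (TransIndep E) (M.image Prod.fst))
    (L : U → ℕ) (z : U → ℕ → V)
    (hz0 : ∀ u ∈ M.image Prod.fst \ N.image Prod.fst, (u, z u 0) ∈ M)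
    (hzdist : ∀ u ∈ M.image Prod.fst \ N.image Prod.fst,
      ∀ i j, i ≤ L u → j ≤ L u → z u i = z u j → i = j)
    (hzW : ∀ u ∈ M.image Prod.fst \ N.image Prod.fst, ∀ i ≤ L u, inW N M (z u i))
    (hzarc : ∀ u ∈ M.image Prod.fst \ N.image Prod.fst,
      ∀ i < L u, Arc N M (z u i) (z u (i + 1)))
    (hzsink : ∀ u ∈ M.image Prod.fst \ N.image Prod.fst,
      ∀ v' : V, ¬ Arc N M (z u (L u)) v')
    (hdisj : ∀ u ∈ M.image Prod.fst \ N.image Prod.fst,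
      ∀ u' ∈ M.image Prod.fst \ N.image Prod.fst, u ≠ u' →
        ∀ i ≤ L u, ∀ j ≤ L u', z u i ≠ z u' j)
    (c : U → U)
    (hc : ∀ u ∈ M.image Prod.fst \ N.image Prod.fst, c u ∈ Xv N (z u (L u))) :
    TransIndep E ((M.image Prod.fst ∩ N.image Prod.fst) ∪
      (M.image Prod.fst \ N.image Prod.fst).image c) := by

  classical
  set B := M.image Prod.fst with hBdef
  set X := N.image Prod.fst with hXdef
  set D := B \ X with hDdef
  have hMfst : ∀ {a : U} {v v' : V}, (a, v) ∈ M → (a, v') ∈ M → v = v' :=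
    fun h1 h2 => congrArg Prod.snd (hM _ h1 _ h2 (Or.inl rfl))
  have hMsnd : ∀ {a a' : U} {v : V}, (a, v) ∈ M → (a', v) ∈ M → a = a' :=
    fun h1 h2 => congrArg Prod.fst (hM _ h1 _ h2 (Or.inr rfl))
  have hXvmem : ∀ {w : U} {v : V}, w ∈ Xv N v → ∃ t, (w, (v, t)) ∈ N := by
    intro w v h
    simp only [Xv, Finset.mem_image, Finset.mem_filter] at h
    obtain ⟨⟨a, v', t⟩, ⟨hp, hv⟩, hw⟩ := h
    dsimp at hv hw
    subst hv; subst hw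
    exact ⟨t, hp⟩
  have hXvE : ∀ {w : U} {v : V}, w ∈ Xv N v → (w, v) ∈ E := by
    intro w v h
    obtain ⟨t, ht⟩ := hXvmem h
    have := hNE ht
    simp only [Ek, Finset.mem_filter] at this
    exact this.2
  have hXvX : ∀ {w : U} {v : V}, w ∈ Xv N v → w ∈ X := by
    intro w v h
    obtain ⟨t, ht⟩ := hXvmem h
    exact Finset.mem_image.2 ⟨_, ht, rfl⟩
  have hXvdisj : ∀ {w : U} {v v' : V}, w ∈ Xv N v → w ∈ Xv N v' → v = v' := by
    intro w v v' h h'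
    obtain ⟨t, ht⟩ := hXvmem h
    obtain ⟨t', ht'⟩ := hXvmem h'
    have := hN _ ht _ ht' (Or.inl rfl)
    exact congrArg (fun p => p.2.1) this
  have hpathinj : ∀ u ∈ D, ∀ u' ∈ D, ∀ i, i ≤ L u → ∀ j, j ≤ L u' →
      z u i = z u' j → u = u' ∧ i = j := by
    intro u hu u' hu' i hi j hj hzz
    by_cases huu : u = u'
    · subst huu
      exact ⟨rfl, hzdist u hu i j hi hj hzz⟩
    · exact absurd hzz (hdisj u hu u' hu' huu i hi j hj)
  have hwit : ∀ u i, ∃ w, u ∈ D → i < L u →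
      w ∈ Xv N (z u i) ∧ (w, z u (i+1)) ∈ M := by
    intro u i
    by_cases h : u ∈ D ∧ i < L u
    · obtain ⟨_, _, _, w, hw1, hw2⟩ := hzarc u h.1 i h.2
      exact ⟨w, fun _ _ => ⟨hw1, hw2⟩⟩
    · exact ⟨u, fun hu hi => absurd ⟨hu, hi⟩ h⟩
  choose g hg using hwit
  have hM0 : ∀ u ∈ D, ∀ w, (w, z u 0) ∈ M → w = u :=
    fun u hu w hw => hMsnd hw (hz0 u hu)
  have hMs : ∀ u ∈ D, ∀ j, j < L u → ∀ w, (w, z u (j+1)) ∈ M → w = g u j :=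
    fun u hu j hj w hw => hMsnd hw (hg u j hu hj).2
  set b : U → ℕ → U := fun u i => if i = L u then c u else g u i with hbdef
  have hbXv : ∀ u ∈ D, ∀ i, i ≤ L u → b u i ∈ Xv N (z u i) := by
    intro u hu i hi
    by_cases h : i = L u
    · subst h
      simpa [hbdef] using hc u hu
    · have hlt := lt_of_le_of_ne hi h
      simpa [hbdef, h] using (hg u i hu hlt).1
  have hbinj : ∀ u ∈ D, ∀ u' ∈ D, ∀ i, i ≤ L u → ∀ j, j ≤ L u' →
      b u i = b u' j → u = u' ∧ i = j := by
    intro u hu u' hu' i hi j hj hb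
    have h1 := hbXv u hu i hi
    have h2 := hbXv u' hu' j hj
    rw [hb] at h1
    exact hpathinj u hu u' hu' i hi j hj (hXvdisj h1 h2)
  have hcuM : ∀ u ∈ D, ∀ v, (c u, v) ∉ M := by
    intro u hu v hcv
    have hcXv := hc u hu
    have hW := hzW u hu (L u) le_rfl
    have hne : z u (L u) ≠ v := by
      rintro rfl
      exact hW _ hcXv hcv
    have hWv : ¬ inW N M v :=
      fun hWv => hzsink u hu v ⟨hW, hWv, hne, c u, hcXv, hcv⟩
    unfold inW at hWv
    push_neg at hWv
    obtain ⟨w, hwXv, hwM⟩ := hWv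
    have hwc : w = c u := hMsnd hwM hcv
    rw [hwc] at hwXv
    exact hne (hXvdisj hcXv hwXv)
  set R : Finset (U × V) :=
    M.filter (fun p => ∃ u ∈ D, ∃ i ≤ L u, z u i = p.2) with hRdef
  set A : Finset (U × V) :=
    D.biUnion (fun u => (Finset.range (L u + 1)).image (fun i => (b u i, z u i)))
    with hAdef
  have hAmem : ∀ {p : U × V}, p ∈ A ↔ ∃ u ∈ D, ∃ i ≤ L u, p = (b u i, z u i) := by
    intro p
    constructor
    · intro hp
      simp only [hAdef, Finset.mem_biUnion, Finset.mem_image, Finset.mem_range,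
        Nat.lt_succ_iff] at hp
      obtain ⟨u, hu, i, hi, hpi⟩ := hp
      exact ⟨u, hu, i, hi, hpi.symm⟩
    · rintro ⟨u, hu, i, hi, rfl⟩
      simp only [hAdef, Finset.mem_biUnion, Finset.mem_image, Finset.mem_range,
        Nat.lt_succ_iff]
      exact ⟨u, hu, i, hi, rfl⟩
  have hnotpath : ∀ {p : U × V}, p ∈ M \ R → ∀ u ∈ D, ∀ i, i ≤ L u → z u i ≠ p.2 := by
    intro p hp u hu i hi hz
    have h := Finset.mem_sdiff.1 hp
    exact h.2 (Finset.mem_filter.2 ⟨h.1, u, hu, i, hi, hz⟩)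
  have hcross : ∀ p ∈ M \ R, ∀ q ∈ A, p.1 ≠ q.1 ∧ p.2 ≠ q.2 := by
    rintro ⟨w, v⟩ hp q hq
    obtain ⟨u, hu, i, hi, rfl⟩ := hAmem.1 hq
    have hpM : (w, v) ∈ M := (Finset.mem_sdiff.1 hp).1
    constructor
    · show w ≠ b u i
      intro h1
      by_cases hiL : i = L u
      · have hcw : w = c u := by rw [h1]; simp [hbdef, hiL]
        rw [hcw] at hpM
        exact hcuM u hu v hpM
      · have hlt := lt_of_le_of_ne hi hiL
        have hgw : w = g u i := by rw [h1]; simp [hbdef, hiL]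
        rw [hgw] at hpM
        have hv : v = z u (i+1) := hMfst hpM (hg u i hu hlt).2
        exact hnotpath hp u hu (i+1) hlt hv.symm
    · show v ≠ z u i
      intro h2
      exact hnotpath hp u hu i hi h2.symm
  refine ⟨(M \ R) ∪ A, ?_, ?_, ?_⟩
  · intro p hp
    rcases Finset.mem_union.1 hp with h | h
    · exact hME (Finset.mem_sdiff.1 h).1
    · obtain ⟨u, hu, i, hi, rfl⟩ := hAmem.1 h
      exact hXvE (hbXv u hu i hi)
  · intro p hp q hq hpq
    rcases Finset.mem_union.1 hp with hp' | hp' <;>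
      rcases Finset.mem_union.1 hq with hq' | hq'
    · exact hM _ (Finset.mem_sdiff.1 hp').1 _ (Finset.mem_sdiff.1 hq').1 hpq
    · rcases hpq with h | h
      · exact absurd h (hcross p hp' q hq').1
      · exact absurd h (hcross p hp' q hq').2
    · rcases hpq with h | h
      · exact absurd h.symm (hcross q hq' p hp').1
      · exact absurd h.symm (hcross q hq' p hp').2
    · obtain ⟨u, hu, i, hi, rfl⟩ := hAmem.1 hp'
      obtain ⟨u', hu', j, hj, hq''⟩ := hAmem.1 hq'
      rw [hq'']
      rw [hq''] at hpq
      rcases hpq with h | h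
      · obtain ⟨rfl, rfl⟩ := hbinj u hu u' hu' i hi j hj h
        rfl
      · obtain ⟨rfl, rfl⟩ := hpathinj u hu u' hu' i hi j hj h
        rfl
  · apply Finset.Subset.antisymm
    · intro w hw
      obtain ⟨p, hp, rfl⟩ := Finset.mem_image.1 hw
      rcases Finset.mem_union.1 hp with hp' | hp'
      · obtain ⟨a, v⟩ := p
        have hpM : (a, v) ∈ M := (Finset.mem_sdiff.1 hp').1
        have haB : a ∈ B := Finset.mem_image.2 ⟨_, hpM, rfl⟩
        by_cases haX : a ∈ X
        · exact Finset.mem_union_left _ (Finset.mem_inter.2 ⟨haB, haX⟩)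
        · exfalso
          have haD : a ∈ D := Finset.mem_sdiff.2 ⟨haB, haX⟩
          have hv : v = z a 0 := hMfst hpM (hz0 a haD)
          exact hnotpath hp' a haD 0 (Nat.zero_le _) hv.symm
      · obtain ⟨u, hu, i, hi, rfl⟩ := hAmem.1 hp'
        show b u i ∈ _
        by_cases hiL : i = L u
        · have hbc : b u i = c u := by simp [hbdef, hiL]
          rw [hbc]
          exact Finset.mem_union_right _ (Finset.mem_image.2 ⟨u, hu, rfl⟩)
        · have hlt := lt_of_le_of_ne hi hiL
          have hgb : b u i = g u i := by simp [hbdef, hiL]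
          have hgB : g u i ∈ B := Finset.mem_image.2 ⟨_, (hg u i hu hlt).2, rfl⟩
          have hgX : g u i ∈ X := hXvX (hg u i hu hlt).1
          rw [hgb]
          exact Finset.mem_union_left _ (Finset.mem_inter.2 ⟨hgB, hgX⟩)
    · intro w hw
      rcases Finset.mem_union.1 hw with hw' | hw'
      · obtain ⟨hwB, hwX⟩ := Finset.mem_inter.1 hw'
        obtain ⟨p, hpM, hpw⟩ := Finset.mem_image.1 hwB
        obtain ⟨a, v⟩ := p
        have haw : a = w := hpw
        subst haw
        by_cases hR : (a, v) ∈ R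
        · obtain ⟨_, u, hu, i, hi, hz⟩ := Finset.mem_filter.1 hR
          have hz' : z u i = v := hz
          rcases i with _ | j
          · rw [← hz'] at hpM
            have hau : a = u := hM0 u hu a hpM
            rw [hau] at hwX
            exact absurd hwX (Finset.mem_sdiff.1 hu).2
          · have hj : j < L u := Nat.lt_of_succ_le hi
            rw [← hz'] at hpM
            have hag : a = g u j := hMs u hu j hj a hpM
            have hbg : b u j = g u j := by simp [hbdef, Nat.ne_of_lt hj]
            have hAj : (b u j, z u j) ∈ A := hAmem.2 ⟨u, hu, j, le_of_lt hj, rfl⟩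
            refine Finset.mem_image.2 ⟨(b u j, z u j), Finset.mem_union_right _ hAj, ?_⟩
            show b u j = a
            rw [hbg, hag]
        · exact Finset.mem_image.2
            ⟨(a, v), Finset.mem_union_left _ (Finset.mem_sdiff.2 ⟨hpM, hR⟩), rfl⟩
      · obtain ⟨u, hu, rfl⟩ := Finset.mem_image.1 hw'
        have hAL : (b u (L u), z u (L u)) ∈ A := hAmem.2 ⟨u, hu, L u, le_rfl, rfl⟩
        refine Finset.mem_image.2 ⟨_, Finset.mem_union_right _ hAL, ?_⟩
        show b u (L u) = c u
        simp [hbdef]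
end

section
/- For every bipartite graph G = (U,V;E), every weight function ω: U → ℤ≥0, and every positive integer k, every optimal base of the k-fold matroid union (M_G)^k with respect to ω is a k-robust subset of the transversal matroid M_G with respect to ω; that is, τ(M_G, ω, k) ≤ k. -/
/-- `X` is a `k`-robust subset of the matroid with independence predicate
`Indep` with respect to `ω`: for every base `B` there are pairwise disjoint
`k`-element sets `F u ⊆ X \ B` (`u ∈ B \ X`) with `ω u ≤ ω v` for each
`v ∈ F u`, such that every choice of one element from each `F u`, together
with `B ∩ X`, is independent. -/
def KRobust {U : Type*} [DecidableEq U] (Indep : Finset U → Prop)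
    (ω : U → ℕ) (k : ℕ) (X : Finset U) : Prop :=
  ∀ B : Finset U, IsBase Indep B →
    ∃ F : U → Finset U,
      (∀ u ∈ B \ X, F u ⊆ X \ B) ∧
      (∀ u ∈ B \ X, (F u).card = k) ∧
      (∀ u ∈ B \ X, ∀ u' ∈ B \ X, u ≠ u' → Disjoint (F u) (F u')) ∧
      (∀ u ∈ B \ X, ∀ v ∈ F u, ω u ≤ ω v) ∧
      (∀ c : U → U, (∀ u ∈ B \ X, c u ∈ F u) →
        Indep ((B ∩ X) ∪ (B \ X).image c))

set_option linter.unusedSectionVars false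
set_option maxHeartbeats 1000000

section Paths
variable {α : Type*} [Fintype α] {R : α → α → Prop}

lemma chain_succ_mem : ∀ {s : α} {T : List α}, List.Chain R s T →
    ∀ x ∈ T, ∃ y ∈ s :: T, R y x := by
  intro s T
  induction T generalizing s with
  | nil => intro _ x hx; simp at hx
  | cons t T ih =>
    intro h x hx
    rw [List.Chain, List.isChain_cons_cons] at h
    rcases List.mem_cons.1 hx with rfl | hx'
    · exact ⟨s, List.mem_cons_self, h.1⟩
    · obtain ⟨y, hy, hR⟩ := ih h.2 x hx'
      exact ⟨y, List.mem_cons_of_mem _ hy, hR⟩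

lemma chain_index {s : α} {T : List α} (h : List.Chain R s T) {z : α} (hz : z ∈ T) :
    ∃ i, ∃ h1 : i + 1 < (s :: T).length, ∃ h0 : i < (s :: T).length,
      (s :: T).get ⟨i + 1, h1⟩ = z ∧ R ((s :: T).get ⟨i, h0⟩) z := by
  obtain ⟨⟨i, hi⟩, rfl⟩ := List.mem_iff_get.1 hz
  have h1 : i + 1 < (s :: T).length := by simpa using Nat.succ_lt_succ hi
  have h0 : i < (s :: T).length := Nat.lt_of_succ_lt h1
  refine ⟨i, h1, h0, rfl, ?_⟩
  have hc : List.Chain' R (s :: T) := h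
  have := List.isChain_iff_getElem.1 hc i (by simpa using hi)
  simpa using this

lemma chain_succ_unique (huniq : ∀ a b c, R a c → R b c → a = b)
    {s : α} {T : List α} (h : List.Chain R s T) (hnd : (s :: T).Nodup)
    {y z z' : α} (hz : z ∈ T) (hz' : z' ∈ T) (hyz : R y z) (hyz' : R y z') :
    z = z' := by
  obtain ⟨i, hi1, hi0, hgz, hRz⟩ := chain_index h hz
  obtain ⟨j, hj1, hj0, hgz', hRz'⟩ := chain_index h hz'
  have hy : (s :: T).get ⟨i, hi0⟩ = y := huniq _ _ _ hRz hyz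
  have hy' : (s :: T).get ⟨j, hj0⟩ = y := huniq _ _ _ hRz' hyz'
  have : (⟨i, hi0⟩ : Fin (s :: T).length) = ⟨j, hj0⟩ :=
    (List.Nodup.get_inj_iff hnd).1 (hy.trans hy'.symm)
  have hij : i = j := by simpa using this
  subst hij
  rw [← hgz, ← hgz']

lemma chain_disjoint (huniq : ∀ a b c, R a c → R b c → a = b)
    {s' : α} {T' : List α} (hs' : ∀ a, ¬ R a s') (hch' : List.Chain R s' T') :
    ∀ {s : α} {T : List α}, List.Chain R s T → s ∉ s' :: T' →
      ∀ x ∈ s :: T, x ∉ s' :: T' := by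
  have step : ∀ x t, x ∉ s' :: T' → R x t → t ∉ s' :: T' := by
    intro x t hx hRt ht
    rcases List.mem_cons.1 ht with rfl | ht'
    · exact hs' x hRt
    · obtain ⟨y, hy, hRy⟩ := chain_succ_mem hch' t ht'
      exact hx (huniq _ _ _ hRy hRt ▸ hy)
  intro s T
  induction T generalizing s with
  | nil =>
    intro _ hsn x hx
    have : x = s := by simpa using hx
    subst this
    exact hsn
  | cons t T ih =>
    intro hch hsn x hx
    rw [List.Chain, List.isChain_cons_cons] at hch
    rcases List.mem_cons.1 hx with rfl | hx'
    · exact hsn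
    · exact ih hch.2 (step s t hsn hch.1) x hx'

lemma chain_snoc : ∀ {s : α} {T : List α}, List.Chain R s T →
    ∀ {b}, R ((s :: T).getLast (List.cons_ne_nil _ _)) b → List.Chain R s (T ++ [b]) := by
  intro s T
  induction T generalizing s with
  | nil => intro _ b hb; simpa [List.Chain] using List.chain_cons.2 ⟨by simpa using hb, List.Chain.nil⟩
  | cons t T ih =>
    intro hch b hb
    rw [List.Chain, List.isChain_cons_cons] at hch
    refine List.chain_cons.2 ⟨hch.1, ih hch.2 ?_⟩
    simpa [List.getLast_cons] using hb

lemma not_mem_of_last_arc (huniq : ∀ a b c, R a c → R b c → a = b)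
    {s : α} (hs : ∀ a, ¬ R a s) {T : List α} (hch : List.Chain R s T)
    (hnd : (s :: T).Nodup) {b : α}
    (hb : R ((s :: T).getLast (List.cons_ne_nil _ _)) b) : b ∉ s :: T := by
  intro hbm
  set a := (s :: T).getLast (List.cons_ne_nil _ _) with ha
  rcases List.mem_cons.1 hbm with rfl | hbT
  · exact hs a hb
  · obtain ⟨i, hi1, hi0, hgz, hRz⟩ := chain_index hch hbT
    have h2 : (s :: T).get ⟨i, hi0⟩ = a := huniq _ _ _ hRz hb
    have hlast : a = (s :: T).get ⟨(s :: T).length - 1, by simp⟩ := by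
      rw [ha, List.getLast_eq_getElem, List.get_eq_getElem]
    rw [hlast] at h2
    have := (List.Nodup.get_inj_iff hnd).1 h2
    have hieq : i = (s :: T).length - 1 := by simpa using this
    omega

lemma exists_sink_path (huniq : ∀ a b c, R a c → R b c → a = b)
    {s : α} (hs : ∀ a, ¬ R a s) :
    ∃ T : List α, List.Chain R s T ∧ (s :: T).Nodup ∧
      ∀ b, ¬ R ((s :: T).getLast (List.cons_ne_nil _ _)) b := by
  suffices H : ∀ n (T : List α), List.Chain R s T → (s :: T).Nodup →
      Fintype.card α ≤ n + (s :: T).length →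
      ∃ T' : List α, List.Chain R s T' ∧ (s :: T').Nodup ∧
        ∀ b, ¬ R ((s :: T').getLast (List.cons_ne_nil _ _)) b by
    exact H (Fintype.card α) [] List.Chain.nil (by simp) (by simp)
  intro n
  induction n with
  | zero =>
    intro T hch hnd hlen
    refine ⟨T, hch, hnd, ?_⟩
    intro b hb
    have hbmem : b ∉ s :: T := not_mem_of_last_arc huniq hs hch hnd hb
    have hnd2 : (b :: s :: T).Nodup := by simp [hnd, hbmem]
    have hlb := List.Nodup.length_le_card hnd2
    simp only [List.length_cons] at hlb hlen
    omega
  | succ n ih =>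
    intro T hch hnd hlen
    by_cases hsink : ∃ b, R ((s :: T).getLast (List.cons_ne_nil _ _)) b
    · obtain ⟨b, hb⟩ := hsink
      have hbmem : b ∉ s :: T := not_mem_of_last_arc huniq hs hch hnd hb
      refine ih (T ++ [b]) (chain_snoc hch hb) ?_ ?_
      · have hnd2 : (s :: T ++ [b]).Nodup := by
          rw [List.nodup_append]
          refine ⟨hnd, by simp, ?_⟩
          intro a ha b' hb' hab
          exact hbmem (by rw [← (List.mem_singleton.1 hb'), ← hab]; exact ha)
        simpa using hnd2
      · simp only [List.length_cons, List.length_append, List.length_singleton] at hlen ⊢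
        omega
    · exact ⟨T, hch, hnd, fun b hb => hsink ⟨b, hb⟩⟩

end Paths

lemma chain_mono_mem {α : Type*} {R S : α → α → Prop} :
    ∀ {a : α} {l : List α}, List.Chain R a l →
      (∀ x ∈ a :: l, ∀ y ∈ l, R x y → S x y) → List.Chain S a l := by
  intro a l
  induction l generalizing a with
  | nil => intro _ _; exact List.Chain.nil
  | cons b l ih =>
    intro hch h
    rw [List.Chain, List.isChain_cons_cons] at hch ⊢
    refine ⟨h a (List.mem_cons_self) b (List.mem_cons_self) hch.1, ih hch.2 ?_⟩
    intro x hx y hy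
    exact h x (List.mem_cons_of_mem _ hx) y (List.mem_cons_of_mem _ hy)

section Bip
variable {U V : Type*} [Fintype U] [Fintype V] [DecidableEq U] [DecidableEq V]

lemma mem_Ek {E : Finset (U × V)} {k : ℕ} {p : U × (V × Fin k)} :
    p ∈ Ek E k ↔ (p.1, p.2.1) ∈ E := by
  simp [Ek]

lemma image_fst_erase {A B : Type*} [DecidableEq A] [DecidableEq B]
    {N : Finset (A × B)} (hm : IsMatching N) {p : A × B} (hp : p ∈ N) :
    (N.erase p).image Prod.fst = (N.image Prod.fst).erase p.1 := by
  ext a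
  simp only [Finset.mem_image, Finset.mem_erase]
  constructor
  · rintro ⟨q, ⟨hqne, hqN⟩, rfl⟩
    refine ⟨?_, q, hqN, rfl⟩
    intro h
    exact hqne (hm q hqN p hp (Or.inl h))
  · rintro ⟨hne, q, hq, rfl⟩
    refine ⟨q, ⟨?_, hq⟩, rfl⟩
    intro h
    exact hne (by rw [h])

lemma union_to_trans {E : Finset (U × V)} {k : ℕ} {I : Finset U}
    (h : UnionIndep (TransIndep E) k I) :
    ∃ N ⊆ Ek E k, IsMatching N ∧ N.image Prod.fst = I := by
  obtain ⟨f, hind, hdisj, hsup⟩ := h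
  choose Nf hNfE hNfm hNfim using hind
  refine ⟨Finset.univ.biUnion (fun i => (Nf i).image (fun p => (p.1, (p.2, i)))), ?_, ?_, ?_⟩
  · intro p hp
    simp only [Finset.mem_biUnion, Finset.mem_image, Finset.mem_univ, true_and] at hp
    obtain ⟨i, q, hq, rfl⟩ := hp
    exact mem_Ek.2 (hNfE i hq)
  · intro p hp q hq hpq
    simp only [Finset.mem_biUnion, Finset.mem_image, Finset.mem_univ, true_and] at hp hq
    obtain ⟨i, p', hp', rfl⟩ := hp
    obtain ⟨j, q', hq', rfl⟩ := hq
    rcases hpq with h1 | h2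
    · simp only at h1
      have hij : i = j := by
        by_contra hne
        have h1' : p'.1 ∈ f i := by
          rw [← hNfim i]; exact Finset.mem_image_of_mem _ hp'
        have h2' : p'.1 ∈ f j := by
          rw [← hNfim j, h1]; exact Finset.mem_image_of_mem _ hq'
        exact (Finset.disjoint_left.1 (hdisj i j hne)) h1' h2'
      subst hij
      have := hNfm i p' hp' q' hq' (Or.inl h1)
      rw [this]
    · simp only [Prod.mk.injEq] at h2
      obtain ⟨h2v, h2i⟩ := h2
      subst h2i
      have := hNfm i p' hp' q' hq' (Or.inr h2v)
      rw [this]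
  · rw [← hsup]
    ext a
    simp only [Finset.mem_image, Finset.mem_biUnion, Finset.mem_univ, true_and,
      Finset.mem_sup]
    constructor
    · rintro ⟨p, ⟨i, q, hq, rfl⟩, rfl⟩
      exact ⟨i, by rw [← hNfim i]; exact Finset.mem_image_of_mem _ hq⟩
    · rintro ⟨i, ha⟩
      rw [← hNfim i] at ha
      obtain ⟨q, hq, rfl⟩ := Finset.mem_image.1 ha
      exact ⟨(q.1, (q.2, i)), ⟨i, q, hq, rfl⟩, rfl⟩

lemma trans_to_union {E : Finset (U × V)} {k : ℕ} {N : Finset (U × (V × Fin k))}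
    (hNE : N ⊆ Ek E k) (hNm : IsMatching N) :
    UnionIndep (TransIndep E) k (N.image Prod.fst) := by
  refine ⟨fun i => ((N.filter fun p => p.2.2 = i).image fun p => p.1), ?_, ?_, ?_⟩
  · intro i
    refine ⟨(N.filter fun p => p.2.2 = i).image fun p => (p.1, p.2.1), ?_, ?_, ?_⟩
    · intro q hq
      obtain ⟨p, hp, rfl⟩ := Finset.mem_image.1 hq
      exact mem_Ek.1 (hNE (Finset.mem_filter.1 hp).1)
    · intro q hq q' hq' hqq
      obtain ⟨p, hp, rfl⟩ := Finset.mem_image.1 hq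
      obtain ⟨p', hp', rfl⟩ := Finset.mem_image.1 hq'
      obtain ⟨hpN, hpi⟩ := Finset.mem_filter.1 hp
      obtain ⟨hp'N, hp'i⟩ := Finset.mem_filter.1 hp'
      have : p = p' := by
        rcases hqq with h | h
        · exact hNm p hpN p' hp'N (Or.inl h)
        · refine hNm p hpN p' hp'N (Or.inr ?_)
          exact Prod.ext h (hpi.trans hp'i.symm)
      rw [this]
    · ext a
      simp [Finset.mem_image]
  · intro i j hij
    rw [Finset.disjoint_left]
    intro a hai haj
    obtain ⟨p, hp, rfl⟩ := Finset.mem_image.1 hai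
    obtain ⟨p', hp', hpa⟩ := Finset.mem_image.1 haj
    obtain ⟨hpN, hpi⟩ := Finset.mem_filter.1 hp
    obtain ⟨hp'N, hp'j⟩ := Finset.mem_filter.1 hp'
    have : p' = p := hNm p' hp'N p hpN (Or.inl hpa)
    subst this
    exact hij (hpi ▸ hp'j ▸ rfl)
  · ext a
    simp only [Finset.mem_sup, Finset.mem_image, Finset.mem_filter]
    constructor
    · rintro ⟨i, -, p, ⟨hp, _⟩, rfl⟩
      exact ⟨p, hp, rfl⟩
    · rintro ⟨p, hp, rfl⟩
      exact ⟨p.2.2, Finset.mem_univ _, p, ⟨hp, rfl⟩, rfl⟩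

lemma rot {E : Finset (U × V)} {k : ℕ} (f : U → V) :
    ∀ (T : List U) (u : U) (N₀ : Finset (U × (V × Fin k))),
      N₀ ⊆ Ek E k → IsMatching N₀ →
      (∀ a ∈ u :: T, (a, f a) ∈ E) →
      List.Chain (fun a b => ∃ t, (b, (f a, t)) ∈ N₀) u T →
      (u :: T).Nodup → (∀ p ∈ N₀, p.1 ≠ u) →
      ∀ ζ : V × Fin k, ζ.1 = f ((u :: T).getLast (List.cons_ne_nil _ _)) →
      (∀ p ∈ N₀, p.2 ≠ ζ) →
      ∃ N₁, N₁ ⊆ Ek E k ∧ IsMatching N₁ ∧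
        N₁.image Prod.fst = insert u (N₀.image Prod.fst) := by
  intro T
  induction T with
  | nil =>
    intro u N₀ hsub hm hf _ _ hfst ζ hζ hsnd
    have hζu : ζ.1 = f u := by simpa using hζ
    refine ⟨insert (u, ζ) N₀, ?_, ?_, ?_⟩
    · intro p hp
      rcases Finset.mem_insert.1 hp with rfl | hp'
      · exact mem_Ek.2 (by simpa [hζu] using hf u (List.mem_cons_self))
      · exact hsub hp'
    · intro p hp q hq hpq
      rcases Finset.mem_insert.1 hp with rfl | hp' <;>
        rcases Finset.mem_insert.1 hq with rfl | hq'
      · rfl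
      · rcases hpq with h | h
        · exact absurd h.symm (hfst q hq')
        · exact absurd h.symm (hsnd q hq')
      · rcases hpq with h | h
        · exact absurd h (hfst p hp')
        · exact absurd h (hsnd p hp')
      · exact hm p hp' q hq' hpq
    · rw [Finset.image_insert]
  | cons u₁ T' ih =>
    intro u N₀ hsub hm hf hch hnd hfst ζ hζ hsnd
    rw [List.Chain, List.isChain_cons_cons] at hch
    obtain ⟨⟨t₁, ht₁⟩, hch'⟩ := hch
    set η : V × Fin k := (f u, t₁) with hη
    set N₀' := insert (u, η) (N₀.erase (u₁, η)) with hN₀'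
    have hu1u : u₁ ≠ u := by
      intro h; rw [List.nodup_cons] at hnd; exact hnd.1 (h ▸ List.mem_cons_self)
    have hndT : (u₁ :: T').Nodup := (List.nodup_cons.1 hnd).2
    have hu1T' : u₁ ∉ T' := (List.nodup_cons.1 hndT).1
    have huT : u ∉ u₁ :: T' := (List.nodup_cons.1 hnd).1
    have hsub' : N₀' ⊆ Ek E k := by
      intro p hp
      rcases Finset.mem_insert.1 hp with rfl | hp'
      · exact mem_Ek.2 (by simpa [hη] using hf u (List.mem_cons_self))
      · exact hsub (Finset.erase_subset _ _ hp')
    have hm' : IsMatching N₀' := by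
      intro p hp q hq hpq
      rcases Finset.mem_insert.1 hp with rfl | hp' <;>
        rcases Finset.mem_insert.1 hq with rfl | hq'
      · rfl
      · exfalso
        have hqN : q ∈ N₀ := Finset.mem_of_mem_erase hq'
        rcases hpq with h | h
        · exact hfst q hqN h.symm
        · have : q = (u₁, η) := hm q hqN (u₁, η) ht₁ (Or.inr (by simp [h.symm]))
          exact (Finset.ne_of_mem_erase hq') this
      · exfalso
        have hpN : p ∈ N₀ := Finset.mem_of_mem_erase hp'
        rcases hpq with h | h
        · exact hfst p hpN h
        · have : p = (u₁, η) := hm p hpN (u₁, η) ht₁ (Or.inr (by simp [h]))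
          exact (Finset.ne_of_mem_erase hp') this
      · exact hm p (Finset.mem_of_mem_erase hp') q (Finset.mem_of_mem_erase hq') hpq
    have hch'' : List.Chain (fun a b => ∃ t, (b, (f a, t)) ∈ N₀') u₁ T' := by
      refine chain_mono_mem hch' ?_
      rintro x hx y hy ⟨t, ht⟩
      refine ⟨t, Finset.mem_insert_of_mem (Finset.mem_erase_of_ne_of_mem ?_ ht)⟩
      intro h
      have : y = u₁ := congrArg Prod.fst h
      exact hu1T' (this ▸ hy)
    have hfst' : ∀ p ∈ N₀', p.1 ≠ u₁ := by
      intro p hp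
      rcases Finset.mem_insert.1 hp with rfl | hp'
      · simpa using hu1u.symm
      · intro h
        have hpN : p ∈ N₀ := Finset.mem_of_mem_erase hp'
        have : p = (u₁, η) := hm p hpN (u₁, η) ht₁ (Or.inl (by simpa using h))
        exact (Finset.ne_of_mem_erase hp') this
    have hζ' : ζ.1 = f ((u₁ :: T').getLast (List.cons_ne_nil _ _)) := by
      rwa [List.getLast_cons (List.cons_ne_nil _ _)] at hζ
    have hsnd' : ∀ p ∈ N₀', p.2 ≠ ζ := by
      intro p hp
      rcases Finset.mem_insert.1 hp with rfl | hp'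
      · simpa using hsnd (u₁, η) ht₁
      · exact hsnd p (Finset.mem_of_mem_erase hp')
    obtain ⟨N₁, hN₁sub, hN₁m, hN₁im⟩ :=
      ih u₁ N₀' hsub' hm' (fun a ha => hf a (List.mem_cons_of_mem _ ha)) hch'' hndT hfst' ζ hζ' hsnd'
    refine ⟨N₁, hN₁sub, hN₁m, ?_⟩
    rw [hN₁im]
    have hima : N₀'.image Prod.fst = insert u ((N₀.image Prod.fst).erase u₁) := by
      rw [hN₀', Finset.image_insert, image_fst_erase hm ht₁]
    rw [hima]
    have hu1mem : u₁ ∈ N₀.image Prod.fst := Finset.mem_image.2 ⟨(u₁, η), ht₁, rfl⟩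
    rw [Finset.insert_comm, Finset.insert_erase hu1mem]

end Bip

/-- Main theorem: for every bipartite graph `G`, weight `ω : U → ℕ`, and
positive integer `k`, every optimal base of the `k`-fold union `(M_G)^k`
with respect to `ω` is a `k`-robust subset of the transversal matroid `M_G`
with respect to `ω` (hence `τ(M_G, ω, k) ≤ k`). -/
theorem optBase_unionK_kRobust {U V : Type*} [Fintype U] [Fintype V]
    [DecidableEq U] [DecidableEq V]
    (E : Finset (U × V)) (ω : U → ℕ) (k : ℕ) (hk : 0 < k)
    (X : Finset U) (hX : IsOptBase (UnionIndep (TransIndep E) k) ω X) :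
    KRobust (TransIndep E) ω k X := by
  intro B hB
  obtain ⟨M, hME, hMm, hMB⟩ := hB.1
  by_cases hV : Nonempty V
  swap
  · have hM0 : M = ∅ := Finset.eq_empty_of_forall_notMem (fun p hp => hV ⟨p.2⟩)
    have hB0 : B = ∅ := by rw [← hMB, hM0, Finset.image_empty]
    subst hB0
    refine ⟨fun _ => ∅, ?_, ?_, ?_, ?_, ?_⟩
    · intro u hu; simp at hu
    · intro u hu; simp at hu
    · intro u hu; simp at hu
    · intro u hu; simp at hu
    · intro c _
      have h0 : ((∅ : Finset U) ∩ X) ∪ ((∅ : Finset U) \ X).image c = ∅ := by simp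
      rw [h0]
      exact ⟨∅, Finset.empty_subset _, fun p hp => absurd hp (Finset.notMem_empty p), by simp⟩
  · have hXb := hX.1
    obtain ⟨N, hNE, hNm, hNX⟩ := union_to_trans hXb.1
    have hkne : Nonempty (Fin k) := ⟨⟨0, hk⟩⟩
    -- partner functions
    have hmpex : ∀ a : U, ∃ v : V, a ∈ B → (a, v) ∈ M := by
      intro a
      by_cases ha : a ∈ B
      · rw [← hMB] at ha
        obtain ⟨p, hp, hpa⟩ := Finset.mem_image.1 ha
        exact ⟨p.2, fun _ => by rwa [← hpa, Prod.mk.eta]⟩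
      · exact ⟨hV.some, fun h => absurd h ha⟩
    choose mpart hmp using hmpex
    have hnpex : ∀ a : U, ∃ ζ : V × Fin k, a ∈ X → (a, ζ) ∈ N := by
      intro a
      by_cases ha : a ∈ X
      · rw [← hNX] at ha
        obtain ⟨p, hp, hpa⟩ := Finset.mem_image.1 ha
        exact ⟨p.2, fun _ => by rwa [← hpa, Prod.mk.eta]⟩
      · exact ⟨⟨hV.some, hkne.some⟩, fun h => absurd h ha⟩
    choose npart hnp using hnpex
    have hmpinj : ∀ a ∈ B, ∀ b ∈ B, mpart a = mpart b → a = b := by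
      intro a ha b hb h
      have := hMm (a, mpart a) (hmp a ha) (b, mpart b) (hmp b hb) (Or.inr (by simpa using h))
      simpa using congrArg Prod.fst this
    have hmemX : ∀ {a : U} {ζ}, (a, ζ) ∈ N → a ∈ X := by
      intro a ζ h
      rw [← hNX]
      exact Finset.mem_image.2 ⟨_, h, rfl⟩
    have hnpu : ∀ {a : U} {ζ}, (a, ζ) ∈ N → ζ = npart a := by
      intro a ζ h
      have haX : a ∈ X := hmemX h
      have := hNm (a, ζ) h (a, npart a) (hnp a haX) (Or.inl rfl)
      simpa using congrArg Prod.snd this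
    have hXvmem : ∀ (a : U) (v : V), a ∈ Xv N v ↔ a ∈ X ∧ (npart a).1 = v := by
      intro a v
      constructor
      · intro h
        obtain ⟨p, hp, hpa⟩ := Finset.mem_image.1 h
        obtain ⟨hpN, hpv⟩ := Finset.mem_filter.1 hp
        have haX : a ∈ X := by rw [← hNX]; exact Finset.mem_image.2 ⟨p, hpN, hpa⟩
        refine ⟨haX, ?_⟩
        have hpn : p.2 = npart a := hnpu (show (a, p.2) ∈ N by rwa [← hpa, Prod.mk.eta])
        rw [← hpn]
        exact hpv
      · rintro ⟨haX, hv⟩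
        exact Finset.mem_image.2 ⟨(a, npart a), Finset.mem_filter.2 ⟨hnp a haX, hv⟩, rfl⟩
    set D := B \ X with hD
    have hDB : ∀ u ∈ D, u ∈ B := fun u hu => (Finset.mem_sdiff.1 hu).1
    have hDX : ∀ u ∈ D, u ∉ X := fun u hu => (Finset.mem_sdiff.1 hu).2
    set R : U → U → Prop :=
      fun a b => a ∈ B ∧ b ∈ B ∧ ∃ t : Fin k, (b, (mpart a, t)) ∈ N with hR
    have huniq : ∀ a b c, R a c → R b c → a = b := by
      rintro a b c ⟨haB, hcB, t, ht⟩ ⟨hbB, -, t', ht'⟩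
      have heq := hNm _ ht _ ht' (Or.inl rfl)
      have hmm : mpart a = mpart b := congrArg (fun p => (Prod.snd p).1) heq
      exact hmpinj a haB b hbB hmm
    have hsrc : ∀ u ∈ D, ∀ a, ¬ R a u := by
      rintro u hu a ⟨-, -, t, ht⟩
      exact hDX u hu (hmemX ht)
    have hpaths : ∀ u : U, ∃ T : List U, u ∈ D →
        List.Chain R u T ∧ (u :: T).Nodup ∧
          ∀ b, ¬ R ((u :: T).getLast (List.cons_ne_nil _ _)) b := by
      intro u
      by_cases hu : u ∈ D
      · obtain ⟨T, h1, h2, h3⟩ := exists_sink_path huniq (hsrc u hu)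
        exact ⟨T, fun _ => ⟨h1, h2, h3⟩⟩
      · exact ⟨[], fun h => absurd h hu⟩
    choose 𝒯 h𝒯 using hpaths
    set w : U → U := fun u => (u :: 𝒯 u).getLast (List.cons_ne_nil _ _) with hw
    set ψ : U → V := fun u => mpart (w u) with hψ
    have hch : ∀ u ∈ D, List.Chain R u (𝒯 u) := fun u hu => (h𝒯 u hu).1
    have hnd : ∀ u ∈ D, (u :: 𝒯 u).Nodup := fun u hu => (h𝒯 u hu).2.1
    have hsink : ∀ u ∈ D, ∀ b, ¬ R (w u) b := fun u hu => (h𝒯 u hu).2.2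
    have hTmem : ∀ u ∈ D, ∀ x ∈ 𝒯 u, x ∈ B ∧ x ∈ X := by
      intro u hu x hx
      obtain ⟨y, hy, hRy⟩ := chain_succ_mem (hch u hu) x hx
      exact ⟨hRy.2.1, hmemX hRy.2.2.choose_spec⟩
    have hLB : ∀ u ∈ D, ∀ x ∈ u :: 𝒯 u, x ∈ B := by
      intro u hu x hx
      rcases List.mem_cons.1 hx with rfl | hx'
      · exact hDB _ hu
      · exact (hTmem u hu x hx').1
    have hwL : ∀ u, w u ∈ u :: 𝒯 u := fun u => List.getLast_mem _
    have hwB : ∀ u ∈ D, w u ∈ B := fun u hu => hLB u hu _ (hwL u)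
    have hLdisj : ∀ u ∈ D, ∀ u' ∈ D, u ≠ u' → ∀ x ∈ u :: 𝒯 u, x ∉ u' :: 𝒯 u' := by
      intro u hu u' hu' hne
      refine chain_disjoint huniq (hsrc u' hu') (hch u' hu') (hch u hu) ?_
      intro hmem
      rcases List.mem_cons.1 hmem with h | h
      · exact hne h
      · exact hDX u hu ((hTmem u' hu' u h).2)
    have hψw : ∀ u, ψ u = mpart (w u) := fun u => rfl
    have hsinkXv : ∀ u ∈ D, ∀ a ∈ Xv N (ψ u), a ∉ B := by
      intro u hu a ha haB
      obtain ⟨haX, hav⟩ := (hXvmem a (ψ u)).1 ha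
      refine hsink u hu a ⟨hwB u hu, haB, (npart a).2, ?_⟩
      have hcopy : (mpart (w u), (npart a).2) = npart a := by
        rw [← hψw u, ← hav]
      rw [hcopy]
      exact hnp a haX
    have hXvfil : ∀ v : V, (Xv N v).card = (N.filter fun p => p.2.1 = v).card := by
      intro v
      rw [Xv]
      apply Finset.card_image_of_injOn
      intro p hp q hq hpq
      exact hNm p (Finset.mem_filter.1 hp).1 q (Finset.mem_filter.1 hq).1 (Or.inl hpq)
    have hXvcard : ∀ v : V, (Xv N v).card ≤ k := by
      intro v
      rw [hXvfil v]
      have h2 : (N.filter fun p => p.2.1 = v).card ≤ (Finset.univ : Finset (Fin k)).card := by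
        apply Finset.card_le_card_of_injOn (fun p => p.2.2) (fun p _ => Finset.mem_univ _)
        intro p hp q hq hpq
        obtain ⟨hpN, hpv⟩ := Finset.mem_filter.1 hp
        obtain ⟨hqN, hqv⟩ := Finset.mem_filter.1 hq
        exact hNm p hpN q hqN (Or.inr (Prod.ext (hpv.trans hqv.symm) hpq))
      simpa using h2
    -- |X_{ψ u}| = k
    have hfreeK : ∀ u ∈ D, (Xv N (ψ u)).card = k := by
      intro u hu
      by_contra hne
      have hlt : (Xv N (ψ u)).card < k := lt_of_le_of_ne (hXvcard _) hne
      have hfree : ∃ t : Fin k, ∀ p ∈ N, p.2 ≠ (ψ u, t) := by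
        by_contra h
        push_neg at h
        have hsubimg : (Finset.univ : Finset (Fin k)) ⊆
            (N.filter fun p => p.2.1 = ψ u).image fun p => p.2.2 := by
          intro t _
          obtain ⟨p, hp, hpt⟩ := h t
          exact Finset.mem_image.2 ⟨p, Finset.mem_filter.2 ⟨hp, by rw [hpt]⟩, by rw [hpt]⟩
        have h1 := Finset.card_le_card hsubimg
        have h2 : ((N.filter fun p => p.2.1 = ψ u).image fun p => p.2.2).card ≤
            (N.filter fun p => p.2.1 = ψ u).card := Finset.card_image_le
        have h3 := hXvfil (ψ u)
        simp only [Finset.card_univ, Fintype.card_fin] at h1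
        omega
      obtain ⟨t, htfree⟩ := hfree
      obtain ⟨N₁, hN₁E, hN₁m, hN₁im⟩ :=
        rot (E := E) mpart (𝒯 u) u N hNE hNm
          (fun a ha => hME (hmp a (hLB u hu a ha)))
          (chain_mono_mem (hch u hu) (by rintro x hx y hy ⟨-, -, t', ht'⟩; exact ⟨t', ht'⟩))
          (hnd u hu)
          (by
            intro p hp hpu
            have hpX : p.1 ∈ X := hmemX (show (p.1, p.2) ∈ N by rwa [Prod.mk.eta])
            rw [hpu] at hpX
            exact hDX u hu hpX)
          (ψ u, t) rfl htfree
      have hind := trans_to_union hN₁E hN₁m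
      rw [hN₁im, hNX] at hind
      have hcard' := hXb.2 _ hind
      rw [Finset.card_insert_of_notMem (hDX u hu)] at hcard'
      omega
    -- weights
    have hwt : ∀ u ∈ D, ∀ a ∈ Xv N (ψ u), ω u ≤ ω a := by
      intro u hu a ha
      obtain ⟨haX, hav⟩ := (hXvmem a (ψ u)).1 ha
      have haB : a ∉ B := hsinkXv u hu a ha
      have hanp : (a, npart a) ∈ N := hnp a haX
      set N₀ := N.erase (a, npart a) with hN₀
      have hsub0 : N₀ ⊆ Ek E k := fun p hp => hNE (Finset.mem_of_mem_erase hp)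
      have hm0 : IsMatching N₀ := fun p hp q hq h =>
        hNm p (Finset.mem_of_mem_erase hp) q (Finset.mem_of_mem_erase hq) h
      obtain ⟨N₁, hN₁E, hN₁m, hN₁im⟩ :=
        rot (E := E) mpart (𝒯 u) u N₀ hsub0 hm0
          (fun x hx => hME (hmp x (hLB u hu x hx)))
          (chain_mono_mem (hch u hu) (by
            rintro x hx y hy ⟨-, hyB, t', ht'⟩
            refine ⟨t', Finset.mem_erase_of_ne_of_mem ?_ ht'⟩
            intro hEq
            have hya : y = a := congrArg Prod.fst hEq
            exact haB (hya ▸ hyB)))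
          (hnd u hu)
          (by
            intro p hp hpu
            have hpN : p ∈ N := Finset.mem_of_mem_erase hp
            have hpX : p.1 ∈ X := hmemX (show (p.1, p.2) ∈ N by rwa [Prod.mk.eta])
            rw [hpu] at hpX
            exact hDX u hu hpX)
          (npart a) (hav.trans rfl)
          (by
            intro p hp h
            have hpN : p ∈ N := Finset.mem_of_mem_erase hp
            have : p = (a, npart a) := hNm p hpN _ hanp (Or.inr h)
            exact (Finset.ne_of_mem_erase hp) this)
      have him0 : N₀.image Prod.fst = X.erase a := by
        rw [hN₀, image_fst_erase hNm hanp, hNX]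
      rw [him0] at hN₁im
      have hind := trans_to_union hN₁E hN₁m
      rw [hN₁im] at hind
      have huXea : u ∉ X.erase a := fun h => (hDX u hu) (Finset.mem_of_mem_erase h)
      have hcards : (insert u (X.erase a)).card = X.card := by
        rw [Finset.card_insert_of_notMem huXea, Finset.card_erase_of_mem haX]
        have : 0 < X.card := Finset.card_pos.2 ⟨a, haX⟩
        omega
      have hbase : IsBase (UnionIndep (TransIndep E) k) (insert u (X.erase a)) :=
        ⟨hind, fun I hI => by rw [hcards]; exact hXb.2 I hI⟩
      have hsum := hX.2 _ hbase
      rw [Finset.sum_insert huXea] at hsum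
      have hsplit : ∑ x ∈ X, ω x = ω a + ∑ x ∈ X.erase a, ω x :=
        (Finset.add_sum_erase X ω haX).symm
      omega
    -- F u ⊆ X \ B
    have hFsub : ∀ u ∈ D, Xv N (ψ u) ⊆ X \ B := by
      intro u hu a ha
      exact Finset.mem_sdiff.2 ⟨((hXvmem a (ψ u)).1 ha).1, hsinkXv u hu a ha⟩
    have hψinj : ∀ u ∈ D, ∀ u' ∈ D, ψ u = ψ u' → u = u' := by
      intro u hu u' hu' h
      by_contra hne
      have hweq : w u = w u' := hmpinj _ (hwB u hu) _ (hwB u' hu') (by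
        rw [← hψw u, ← hψw u']; exact h)
      exact hLdisj u hu u' hu' hne (w u) (hwL u) (hweq ▸ hwL u')
    have hFdisj : ∀ u ∈ D, ∀ u' ∈ D, u ≠ u' → Disjoint (Xv N (ψ u)) (Xv N (ψ u')) := by
      intro u hu u' hu' hne
      rw [Finset.disjoint_left]
      intro a ha ha'
      have h1 := ((hXvmem a (ψ u)).1 ha).2
      have h2 := ((hXvmem a (ψ u')).1 ha').2
      exact hne (hψinj u hu u' hu' (h1 ▸ h2))
    refine ⟨fun u => Xv N (ψ u), hFsub, hfreeK, hFdisj, hwt, ?_⟩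
    -- the simultaneous exchange
    intro c hc
    set TT : Finset U := D.biUnion (fun u => (𝒯 u).toFinset) with hTT
    have hTTmem : ∀ z : U, z ∈ TT ↔ ∃ u ∈ D, z ∈ 𝒯 u := by
      intro z; simp [hTT, List.mem_toFinset]
    have hTTBX : ∀ z ∈ TT, z ∈ B ∧ z ∈ X := by
      intro z hz
      obtain ⟨u, hu, hzu⟩ := (hTTmem z).1 hz
      exact hTmem u hu z hzu
    have hpredTT : ∀ z ∈ TT, ∃ u ∈ D, z ∈ 𝒯 u ∧ ∃ y, y ∈ u :: 𝒯 u ∧ R y z := by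
      intro z hz
      obtain ⟨u, hu, hzu⟩ := (hTTmem z).1 hz
      obtain ⟨y, hy, hRy⟩ := chain_succ_mem (hch u hu) z hzu
      exact ⟨u, hu, hzu, y, hy, hRy⟩
    have hpredg : ∀ {y z : U}, R y z → mpart y = (npart z).1 := by
      rintro y z ⟨-, -, t, ht⟩
      have := hnpu ht
      rw [← this]
    have hginjTT : ∀ z ∈ TT, ∀ z' ∈ TT, (npart z).1 = (npart z').1 → z = z' := by
      intro z hz z' hz' hgg
      obtain ⟨u, hu, hzu, y, hy, hRy⟩ := hpredTT z hz
      obtain ⟨u', hu', hzu', y', hy', hRy'⟩ := hpredTT z' hz'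
      have hyy : y = y' := by
        apply hmpinj y hRy.1 y' hRy'.1
        rw [hpredg hRy, hpredg hRy', hgg]
      subst hyy
      have huu : u = u' := by
        by_contra hne
        exact hLdisj u hu u' hu' hne y hy hy'
      subst huu
      exact chain_succ_unique huniq (hch u hu) (hnd u hu) hzu hzu' hRy hRy'
    have hnotL : ∀ z : U, z ∈ X → z ∉ TT → ∀ u ∈ D, z ∉ u :: 𝒯 u := by
      intro z hzX hzTT u hu hzL
      rcases List.mem_cons.1 hzL with rfl | h
      · exact hDX _ hu hzX
      · exact hzTT ((hTTmem z).2 ⟨u, hu, h⟩)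
    have hsnd12 : ∀ z : U, z ∈ B → z ∈ X → z ∉ TT → ∀ z' ∈ TT, mpart z ≠ (npart z').1 := by
      intro z hzB hzX hzTT z' hz' h
      obtain ⟨u', hu', hz'u, y, hy, hRy⟩ := hpredTT z' hz'
      have : z = y := hmpinj z hzB y hRy.1 (h.trans (hpredg hRy).symm)
      exact hnotL z hzX hzTT u' hu' (this ▸ hy)
    have hsnd13 : ∀ z : U, z ∈ B → z ∈ X → z ∉ TT → ∀ z₀ ∈ D, mpart z ≠ ψ z₀ := by
      intro z hzB hzX hzTT z₀ hz₀ h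
      have : z = w z₀ := hmpinj z hzB (w z₀) (hwB z₀ hz₀) (by rw [h, hψw])
      exact hnotL z hzX hzTT z₀ hz₀ (this ▸ hwL z₀)
    have hsnd23 : ∀ z ∈ TT, ∀ z₀ ∈ D, (npart z).1 ≠ ψ z₀ := by
      intro z hz z₀ hz₀ h
      have hzX := (hTTBX z hz).2
      have : z ∈ Xv N (ψ z₀) := (hXvmem z (ψ z₀)).2 ⟨hzX, h⟩
      exact hsinkXv z₀ hz₀ z this (hTTBX z hz).1
    have hcB : ∀ z ∈ D, c z ∉ B := by
      intro z hz
      exact (Finset.mem_sdiff.1 (hFsub z hz (hc z hz))).2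
    have hcX : ∀ z ∈ D, c z ∈ Xv N (ψ z) := fun z hz => hc z hz
    have hcinj : ∀ z ∈ D, ∀ z' ∈ D, c z = c z' → z = z' := by
      intro z hz z' hz' h
      by_contra hne
      exact (Finset.disjoint_left.1 (hFdisj z hz z' hz' hne)) (hcX z hz) (h ▸ hcX z' hz')
    set MM := (((B ∩ X) \ TT).image fun z => (z, mpart z)) ∪
            (TT.image fun z => (z, (npart z).1)) ∪
            (D.image fun z => (c z, ψ z)) with hMM
    have hclass : ∀ p ∈ MM,
          (∃ z, (z ∈ B ∧ z ∈ X ∧ z ∉ TT) ∧ p = (z, mpart z)) ∨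
          (∃ z, z ∈ TT ∧ p = (z, (npart z).1)) ∨
          (∃ z, z ∈ D ∧ p = (c z, ψ z)) := by
      intro p hp
      rw [hMM] at hp
      rcases Finset.mem_union.1 hp with hp' | hp'
      · rcases Finset.mem_union.1 hp' with hp'' | hp''
        · obtain ⟨z, hz, rfl⟩ := Finset.mem_image.1 hp''
          obtain ⟨hz1, hz2⟩ := Finset.mem_sdiff.1 hz
          obtain ⟨hzB, hzX⟩ := Finset.mem_inter.1 hz1
          exact Or.inl ⟨z, ⟨hzB, hzX, hz2⟩, rfl⟩
        · obtain ⟨z, hz, rfl⟩ := Finset.mem_image.1 hp''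
          exact Or.inr (Or.inl ⟨z, hz, rfl⟩)
      · obtain ⟨z, hz, rfl⟩ := Finset.mem_image.1 hp'
        exact Or.inr (Or.inr ⟨z, hz, rfl⟩)
    refine ⟨MM, ?_, ?_, ?_⟩
    · -- subset of E
      intro p hp
      rcases hclass p hp with ⟨z, ⟨hzB, hzX, hzTT⟩, rfl⟩ | ⟨z, hz, rfl⟩ | ⟨z, hz, rfl⟩
      · exact hME (hmp z hzB)
      · exact mem_Ek.1 (hNE (hnp z (hTTBX z hz).2))
      · obtain ⟨hczX, hczv⟩ := (hXvmem (c z) (ψ z)).1 (hcX z hz)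
        have := mem_Ek.1 (hNE (hnp (c z) hczX))
        rwa [hczv] at this
    · -- matching
      intro p hp q hq hpq
      rcases hclass p hp with ⟨z, ⟨hzB, hzX, hzTT⟩, rfl⟩ | ⟨z, hz, rfl⟩ | ⟨z, hz, rfl⟩ <;>
        rcases hclass q hq with ⟨z', ⟨hz'B, hz'X, hz'TT⟩, rfl⟩ | ⟨z', hz', rfl⟩ | ⟨z', hz', rfl⟩
      · -- 1,1
        have : z = z' := by
          rcases hpq with h | h
          · exact h
          · exact hmpinj z hzB z' hz'B h
        rw [this]
      · -- 1,2
        exfalso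
        rcases hpq with h | h
        · simp only at h
          exact hzTT (h ▸ hz')
        · exact hsnd12 z hzB hzX hzTT z' hz' h
      · -- 1,3
        exfalso
        rcases hpq with h | h
        · simp only at h
          exact hcB z' hz' (h ▸ hzB)
        · exact hsnd13 z hzB hzX hzTT z' hz' h
      · -- 2,1
        exfalso
        rcases hpq with h | h
        · simp only at h
          exact hz'TT (h ▸ hz)
        · exact hsnd12 z' hz'B hz'X hz'TT z hz h.symm
      · -- 2,2
        have : z = z' := by
          rcases hpq with h | h
          · exact h
          · exact hginjTT z hz z' hz' h
        rw [this]
      · -- 2,3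
        exfalso
        rcases hpq with h | h
        · simp only at h
          exact hcB z' hz' (h ▸ (hTTBX z hz).1)
        · exact hsnd23 z hz z' hz' h
      · -- 3,1
        exfalso
        rcases hpq with h | h
        · simp only at h
          exact hcB z hz (h ▸ hz'B)
        · exact hsnd13 z' hz'B hz'X hz'TT z hz h.symm
      · -- 3,2
        exfalso
        rcases hpq with h | h
        · simp only at h
          exact hcB z hz (h ▸ (hTTBX z' hz').1)
        · exact hsnd23 z' hz' z hz h.symm
      · -- 3,3
        have : z = z' := by
          rcases hpq with h | h
          · exact hcinj z hz z' hz' h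
          · exact hψinj z hz z' hz' h
        rw [this]
    · -- image
      ext a
      constructor
      · intro ha
        obtain ⟨p, hp, rfl⟩ := Finset.mem_image.1 ha
        rcases hclass p hp with ⟨z, ⟨hzB, hzX, hzTT⟩, rfl⟩ | ⟨z, hz, rfl⟩ | ⟨z, hz, rfl⟩
        · exact Finset.mem_union.2 (Or.inl (Finset.mem_inter.2 ⟨hzB, hzX⟩))
        · exact Finset.mem_union.2 (Or.inl (Finset.mem_inter.2 ⟨(hTTBX z hz).1, (hTTBX z hz).2⟩))
        · exact Finset.mem_union.2 (Or.inr (Finset.mem_image.2 ⟨z, hz, rfl⟩))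
      · intro ha
        rcases Finset.mem_union.1 ha with h | h
        · by_cases hTTa : a ∈ TT
          · refine Finset.mem_image.2 ⟨(a, (npart a).1), ?_, rfl⟩
            rw [hMM]
            exact Finset.mem_union.2 (Or.inl (Finset.mem_union.2 (Or.inr
              (Finset.mem_image.2 ⟨a, hTTa, rfl⟩))))
          · refine Finset.mem_image.2 ⟨(a, mpart a), ?_, rfl⟩
            rw [hMM]
            exact Finset.mem_union.2 (Or.inl (Finset.mem_union.2 (Or.inl
              (Finset.mem_image.2 ⟨a, Finset.mem_sdiff.2 ⟨h, hTTa⟩, rfl⟩))))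
        · obtain ⟨z, hz, rfl⟩ := Finset.mem_image.1 h
          refine Finset.mem_image.2 ⟨(c z, ψ z), ?_, rfl⟩
          rw [hMM]
          exact Finset.mem_union.2 (Or.inr (Finset.mem_image.2 ⟨z, hz, rfl⟩))
end

section
/- Let M = (U, I) be a matroid, ω: U → ℤ≥0, and ξ an ordering of U with weights non-increasing. Then the greedy algorithm output Greedy(ξ) (adding ξ(i) when it keeps the current set independent) is an optimal base of M with respect to ω. -/
open Classical in
noncomputable def greedy {U : Type*} [DecidableEq U] (Indep : Finset U → Prop)
    (ξ : ℕ → U) : ℕ → Finset U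
  | 0 => ∅
  | n + 1 =>
      if Indep (insert (ξ n) (greedy Indep ξ n)) then insert (ξ n) (greedy Indep ξ n)
      else greedy Indep ξ n

section lemmas
open Classical
variable {U : Type*} [DecidableEq U] (Indep : Finset U → Prop) (ξ : ℕ → U)

lemma greedy_succ (n : ℕ) : greedy Indep ξ (n+1) =
    if Indep (insert (ξ n) (greedy Indep ξ n)) then insert (ξ n) (greedy Indep ξ n)
    else greedy Indep ξ n := by
  rw [greedy]

lemma greedy_subset_succ (n : ℕ) : greedy Indep ξ n ⊆ greedy Indep ξ (n+1) := by
  rw [greedy_succ]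
  split
  · exact Finset.subset_insert _ _
  · exact Finset.Subset.refl _

lemma greedy_mono {m n : ℕ} (h : m ≤ n) : greedy Indep ξ m ⊆ greedy Indep ξ n := by
  induction n with
  | zero => simp [Nat.le_zero.mp h]
  | succ n ih =>
    rcases Nat.le_succ_iff.mp h with h' | h'
    · exact (ih h').trans (greedy_subset_succ _ _ _)
    · simp [h']

lemma greedy_indep (h0 : Indep ∅) (n : ℕ) : Indep (greedy Indep ξ n) := by
  induction n with
  | zero => simpa [greedy]
  | succ n ih =>
    rw [greedy_succ]
    split
    · assumption
    · exact ih

lemma greedy_subset_image (n : ℕ) :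
    greedy Indep ξ n ⊆ (Finset.range n).image ξ := by
  induction n with
  | zero => simp [greedy]
  | succ n ih =>
    rw [greedy_succ]
    have h2 : (Finset.range n).image ξ ⊆ (Finset.range (n+1)).image ξ :=
      Finset.image_subset_image (by simp [Finset.range_subset]; exact fun x hx => hx.le)
    split
    · intro u hu
      rcases Finset.mem_insert.mp hu with h | h
      · exact Finset.mem_image.mpr ⟨n, by simp, h.symm⟩
      · exact h2 (ih h)
    · exact fun u hu => h2 (ih hu)

end lemmas

lemma rir (m n : ℕ) : Finset.range m ∩ Finset.range n = Finset.range (min m n) := by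
  ext x; simp only [Finset.mem_inter, Finset.mem_range, lt_min_iff]

-- weight comparison lemma on index sets
lemma aux_sum (w : ℕ → ℕ) :
    ∀ N : ℕ, (∀ i j, i ≤ j → j < N → w j ≤ w i) →
      ∀ A B : Finset ℕ, A ⊆ Finset.range N → B ⊆ Finset.range N →
        (∀ k, (B ∩ Finset.range k).card ≤ (A ∩ Finset.range k).card) →
        ∑ i ∈ B, w i ≤ ∑ i ∈ A, w i := by
  intro N
  induction N with
  | zero =>
    intro _ A B hA hB _
    have : B = ∅ := Finset.subset_empty.mp (by simpa using hB)
    simp [this]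
  | succ N ih =>
    intro hmono A B hA hB hcount
    have hmono' : ∀ i j, i ≤ j → j < N → w j ≤ w i :=
      fun i j hij hj => hmono i j hij (Nat.lt_succ_of_lt hj)
    have hBe : B.erase N = B ∩ Finset.range N := by
      ext x
      simp only [Finset.mem_erase, Finset.mem_inter, Finset.mem_range]
      constructor
      · rintro ⟨hne, hx⟩
        exact ⟨hx, lt_of_le_of_ne (Nat.lt_succ_iff.mp (Finset.mem_range.mp (hB hx))) hne⟩
      · rintro ⟨hx, hlt⟩; exact ⟨Nat.ne_of_lt hlt, hx⟩
    have hBe_sub : B.erase N ⊆ Finset.range N := by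
      rw [hBe]; exact Finset.inter_subset_right
    have hBcapB : B ∩ Finset.range (N+1) = B := Finset.inter_eq_left.mpr hB
    have hAcapA : A ∩ Finset.range (N+1) = A := Finset.inter_eq_left.mpr hA
    have hcardBA : B.card ≤ A.card := by
      have := hcount (N+1); rwa [hBcapB, hAcapA] at this
    have hinterB : ∀ k, B.erase N ∩ Finset.range k = B ∩ Finset.range (min N k) := by
      intro k
      rw [hBe, Finset.inter_assoc, rir]
    -- sum over B
    by_cases hNB : N ∈ B
    · have hsumB : ∑ i ∈ B, w i = (∑ i ∈ B.erase N, w i) + w N :=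
        (Finset.sum_erase_add B w hNB).symm
      by_cases hNA : N ∈ A
      · -- erase N from both
        have hAe : A.erase N = A ∩ Finset.range N := by
          ext x
          simp only [Finset.mem_erase, Finset.mem_inter, Finset.mem_range]
          constructor
          · rintro ⟨hne, hx⟩
            exact ⟨hx, lt_of_le_of_ne (Nat.lt_succ_iff.mp (Finset.mem_range.mp (hA hx))) hne⟩
          · rintro ⟨hx, hlt⟩; exact ⟨Nat.ne_of_lt hlt, hx⟩
        have hAe_sub : A.erase N ⊆ Finset.range N := by
          rw [hAe]; exact Finset.inter_subset_right
        have hc : ∀ k, (B.erase N ∩ Finset.range k).card ≤ (A.erase N ∩ Finset.range k).card := by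
          intro k
          rw [hinterB, hAe, Finset.inter_assoc, rir]
          exact hcount _
        have := ih hmono' _ _ hAe_sub hBe_sub hc
        rw [hsumB, ← Finset.sum_erase_add A w hNA]
        omega
      · -- N ∈ B, N ∉ A : erase max of A
        have hAne : A.Nonempty := by
          rw [← Finset.card_pos]
          have : 0 < B.card := Finset.card_pos.mpr ⟨N, hNB⟩
          omega
        set a := A.max' hAne with ha
        have haA : a ∈ A := A.max'_mem hAne
        have haN : a < N := by
          have h1 : a < N + 1 := Finset.mem_range.mp (hA haA)
          have h2 : a ≠ N := fun h => hNA (h ▸ haA)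
          omega
        have hAmax : ∀ x ∈ A, x ≤ a := fun x hx => A.le_max' x hx
        have hAe : A.erase a = A ∩ Finset.range a := by
          ext x
          simp only [Finset.mem_erase, Finset.mem_inter, Finset.mem_range]
          constructor
          · rintro ⟨hne, hx⟩
            exact ⟨hx, lt_of_le_of_ne (hAmax x hx) hne⟩
          · rintro ⟨hx, hlt⟩; exact ⟨Nat.ne_of_lt hlt, hx⟩
        have hAe_sub : A.erase a ⊆ Finset.range N :=
          fun x hx => Finset.mem_range.mpr (lt_of_le_of_lt (hAmax x (Finset.mem_of_mem_erase hx)) haN)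
        have hcardAe : (A.erase a).card = A.card - 1 := Finset.card_erase_of_mem haA
        have hcardBe : (B.erase N).card = B.card - 1 := Finset.card_erase_of_mem hNB
        have hc : ∀ k, (B.erase N ∩ Finset.range k).card ≤ (A.erase a ∩ Finset.range k).card := by
          intro k
          by_cases hk : k ≤ a
          · rw [hinterB, hAe, Finset.inter_assoc, rir,
              min_eq_right (by omega : k ≤ N), min_eq_right (by omega : k ≤ a)]
            exact hcount _
          · have h1 : A.erase a ∩ Finset.range k = A.erase a := by
              apply Finset.inter_eq_left.mpr
              rw [hAe]
              intro x hx
              rcases Finset.mem_inter.mp hx with ⟨_, hxa⟩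
              have := Finset.mem_range.mp hxa
              exact Finset.mem_range.mpr (by omega)
            calc (B.erase N ∩ Finset.range k).card ≤ (B.erase N).card :=
                  Finset.card_le_card Finset.inter_subset_left
              _ ≤ (A.erase a).card := by omega
              _ = (A.erase a ∩ Finset.range k).card := by rw [h1]
        have hsum := ih hmono' _ _ hAe_sub hBe_sub hc
        have hwa : w N ≤ w a := hmono a N (le_of_lt haN) (Nat.lt_succ_self N)
        rw [hsumB, ← Finset.sum_erase_add A w haA]
        omega
    · -- N ∉ B
      have hBsub : B ⊆ Finset.range N := by
        intro x hx
        have := Finset.mem_range.mp (hB hx)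
        have : x ≠ N := fun h => hNB (h ▸ hx)
        simp only [Finset.mem_range]; omega
      have hAe : A.erase N = A ∩ Finset.range N := by
        ext x
        simp only [Finset.mem_erase, Finset.mem_inter, Finset.mem_range]
        constructor
        · rintro ⟨hne, hx⟩
          exact ⟨hx, lt_of_le_of_ne (Nat.lt_succ_iff.mp (Finset.mem_range.mp (hA hx))) hne⟩
        · rintro ⟨hx, hlt⟩; exact ⟨Nat.ne_of_lt hlt, hx⟩
      have hAe_sub : A.erase N ⊆ Finset.range N := by
        rw [hAe]; exact Finset.inter_subset_right
      have hc : ∀ k, (B ∩ Finset.range k).card ≤ (A.erase N ∩ Finset.range k).card := by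
        intro k
        rw [hAe, Finset.inter_assoc, rir]
        by_cases hk : k ≤ N
        · rw [min_eq_right (by omega : k ≤ N)]; exact hcount _
        · rw [min_eq_left (by omega : N ≤ k)]
          have : B ∩ Finset.range k = B := Finset.inter_eq_left.mpr
            (hBsub.trans (by simp [Finset.range_subset]; omega))
          rw [this, ← Finset.inter_eq_left.mpr hBsub]
          exact hcount _
      have := ih hmono' _ _ hAe_sub hBsub hc
      calc ∑ i ∈ B, w i ≤ ∑ i ∈ A.erase N, w i := this
        _ ≤ ∑ i ∈ A, w i := Finset.sum_le_sum_of_subset (Finset.erase_subset _ _)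

section greedy2
open Classical
variable {U : Type*} [DecidableEq U] (Indep : Finset U → Prop) (ξ : ℕ → U)

lemma greedy_card_ge (h0 : Indep ∅)
    (h_subset : ∀ I J : Finset U, I ⊆ J → Indep J → Indep I)
    (h_exch : ∀ I J : Finset U, Indep I → Indep J → I.card < J.card →
      ∃ u ∈ J \ I, Indep (insert u I)) :
    ∀ k (J : Finset U), Indep J → J ⊆ (Finset.range k).image ξ →
      J.card ≤ (greedy Indep ξ k).card := by
  intro k J hJ hJsub
  by_contra h
  push_neg at h
  obtain ⟨u, hu, hind⟩ := h_exch _ _ (greedy_indep Indep ξ h0 k) hJ h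
  obtain ⟨huJ, huG⟩ := Finset.mem_sdiff.mp hu
  obtain ⟨i, hi, hξi⟩ := Finset.mem_image.mp (hJsub huJ)
  have hik : i < k := Finset.mem_range.mp hi
  subst hξi
  have hGsub : insert (ξ i) (greedy Indep ξ i) ⊆ insert (ξ i) (greedy Indep ξ k) :=
    Finset.insert_subset_insert _ (greedy_mono Indep ξ (le_of_lt hik))
  have hindi : Indep (insert (ξ i) (greedy Indep ξ i)) := h_subset _ _ hGsub hind
  have hmem : ξ i ∈ greedy Indep ξ (i+1) := by
    rw [greedy_succ, if_pos hindi]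
    exact Finset.mem_insert_self _ _
  exact huG (greedy_mono Indep ξ hik hmem)

lemma greedy_mem_lift {N : ℕ} (hinj : ∀ i j, i < N → j < N → ξ i = ξ j → i = j) :
    ∀ n, n ≤ N → ∀ i, i < N → ξ i ∈ greedy Indep ξ n → ξ i ∈ greedy Indep ξ (i+1) ∧ i < n := by
  intro n
  induction n with
  | zero => intro _ i _ h; simp [greedy] at h
  | succ n ih =>
    intro hn i hi hmem
    rw [greedy_succ] at hmem
    by_cases hcase : Indep (insert (ξ n) (greedy Indep ξ n))
    · rw [if_pos hcase] at hmem
      rcases Finset.mem_insert.mp hmem with h | h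
      · have : i = n := hinj i n hi (by omega) h
        subst this
        constructor
        · rw [greedy_succ, if_pos hcase]; exact Finset.mem_insert_self _ _
        · omega
      · obtain ⟨h1, h2⟩ := ih (by omega) i hi h
        exact ⟨h1, by omega⟩
    · rw [if_neg hcase] at hmem
      obtain ⟨h1, h2⟩ := ih (by omega) i hi hmem
      exact ⟨h1, by omega⟩

lemma greedy_inter_image {N : ℕ} (hinj : ∀ i j, i < N → j < N → ξ i = ξ j → i = j)
    {k : ℕ} (hk : k ≤ N) :
    greedy Indep ξ N ∩ (Finset.range k).image ξ = greedy Indep ξ k := by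
  apply Finset.Subset.antisymm
  · intro u hu
    obtain ⟨huG, huim⟩ := Finset.mem_inter.mp hu
    obtain ⟨i, hi, hξi⟩ := Finset.mem_image.mp huim
    have hik : i < k := Finset.mem_range.mp hi
    subst hξi
    have := (greedy_mem_lift Indep ξ hinj N (le_refl N) i (by omega) huG).1
    exact greedy_mono Indep ξ (by omega) this
  · intro u hu
    exact Finset.mem_inter.mpr ⟨greedy_mono Indep ξ hk hu, greedy_subset_image Indep ξ k hu⟩

end greedy2

theorem greedy_is_optimal_base' {U : Type*} [Fintype U] [DecidableEq U]
    (Indep : Finset U → Prop)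
    (h_nonempty : Indep ∅)
    (h_subset : ∀ I J : Finset U, I ⊆ J → Indep J → Indep I)
    (h_exch : ∀ I J : Finset U, Indep I → Indep J → I.card < J.card →
      ∃ u ∈ J \ I, Indep (insert u I))
    (ω : U → ℕ) (ξ : ℕ → U)
    (hbij : Function.Bijective fun i : Fin (Fintype.card U) => ξ i)
    (hmono : ∀ i j, i ≤ j → j < Fintype.card U → ω (ξ j) ≤ ω (ξ i)) :
    (Indep (greedy Indep ξ (Fintype.card U)) ∧
      ∀ I : Finset U, Indep I → I.card ≤ (greedy Indep ξ (Fintype.card U)).card) ∧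
    ∀ B' : Finset U, Indep B' →
      ∑ u ∈ B', ω u ≤ ∑ u ∈ greedy Indep ξ (Fintype.card U), ω u := by
  classical
  set N := Fintype.card U with hN
  have hinj : ∀ i j, i < N → j < N → ξ i = ξ j → i = j := by
    intro i j hi hj h
    have := hbij.injective (a₁ := ⟨i, hi⟩) (a₂ := ⟨j, hj⟩) h
    exact congrArg Fin.val this
  have hsurj : ∀ u : U, ∃ i, i < N ∧ ξ i = u := by
    intro u
    obtain ⟨i, hi⟩ := hbij.surjective u
    exact ⟨i.1, i.2, hi⟩
  have huniv : ∀ S : Finset U, S ⊆ (Finset.range N).image ξ := by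
    intro S u _
    obtain ⟨i, hi, hξ⟩ := hsurj u
    exact Finset.mem_image.mpr ⟨i, Finset.mem_range.mpr hi, hξ⟩
  have hbase : Indep (greedy Indep ξ N) ∧
      ∀ I : Finset U, Indep I → I.card ≤ (greedy Indep ξ N).card := by
    refine ⟨greedy_indep Indep ξ h_nonempty N, fun I hI => ?_⟩
    exact greedy_card_ge Indep ξ h_nonempty h_subset h_exch N I hI (huniv I)
  refine ⟨hbase, ?_⟩
  intro B' hB'
  -- index sets
  have hsum : ∀ S : Finset U,
      ∑ u ∈ S, ω u = ∑ i ∈ (Finset.range N).filter (fun i => ξ i ∈ S), ω (ξ i) := by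
    intro S
    have hSeq : S = ((Finset.range N).filter (fun i => ξ i ∈ S)).image ξ := by
      ext u
      simp only [Finset.mem_image, Finset.mem_filter, Finset.mem_range]
      constructor
      · intro hu
        obtain ⟨i, hi, hξ⟩ := hsurj u
        exact ⟨i, ⟨hi, hξ ▸ hu⟩, hξ⟩
      · rintro ⟨i, ⟨_, hmem⟩, rfl⟩; exact hmem
    conv_lhs => rw [hSeq]
    apply Finset.sum_image
    intro i hi j hj h
    exact hinj i j (Finset.mem_range.mp (Finset.mem_filter.mp hi).1)
      (Finset.mem_range.mp (Finset.mem_filter.mp hj).1) h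
  have hcard_idx : ∀ (S : Finset U) (k : ℕ), k ≤ N →
      ((Finset.range k).filter (fun i => ξ i ∈ S)).card =
        (S ∩ (Finset.range k).image ξ).card := by
    intro S k hk
    have him : ((Finset.range k).filter (fun i => ξ i ∈ S)).image ξ =
        S ∩ (Finset.range k).image ξ := by
      ext u
      simp only [Finset.mem_image, Finset.mem_filter, Finset.mem_range, Finset.mem_inter]
      constructor
      · rintro ⟨i, ⟨hik, hmem⟩, rfl⟩
        exact ⟨hmem, i, hik, rfl⟩
      · rintro ⟨hmem, i, hik, rfl⟩
        exact ⟨i, ⟨hik, hmem⟩, rfl⟩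
    rw [← him]
    apply (Finset.card_image_of_injOn ?_).symm
    intro i hi j hj h
    have hik := Finset.mem_range.mp (Finset.mem_filter.mp hi).1
    have hjk := Finset.mem_range.mp (Finset.mem_filter.mp hj).1
    exact hinj i j (by omega) (by omega) h
  have hfilter_inter : ∀ (S : Finset U) (k : ℕ),
      ((Finset.range N).filter (fun i => ξ i ∈ S)) ∩ Finset.range k =
        (Finset.range (min N k)).filter (fun i => ξ i ∈ S) := by
    intro S k
    ext i
    simp only [Finset.mem_inter, Finset.mem_filter, Finset.mem_range, lt_min_iff]
    tauto
  have hcount : ∀ k,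
      (((Finset.range N).filter (fun i => ξ i ∈ B')) ∩ Finset.range k).card ≤
      (((Finset.range N).filter (fun i => ξ i ∈ greedy Indep ξ N)) ∩ Finset.range k).card := by
    intro k
    rw [hfilter_inter, hfilter_inter]
    set k' := min N k with hk'
    have hk'N : k' ≤ N := min_le_left _ _
    rw [hcard_idx B' k' hk'N, hcard_idx (greedy Indep ξ N) k' hk'N]
    rw [greedy_inter_image Indep ξ hinj hk'N]
    apply greedy_card_ge Indep ξ h_nonempty h_subset h_exch k'
    · exact h_subset _ _ Finset.inter_subset_left hB'
    · exact Finset.inter_subset_right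
  rw [hsum B', hsum (greedy Indep ξ N)]
  exact aux_sum (fun i => ω (ξ i)) N hmono _ _
    (Finset.filter_subset _ _) (Finset.filter_subset _ _) hcount


/-- Rado's theorem: the greedy algorithm run on a matroid with a
non-increasing-weight ordering `ξ` of the ground set outputs an optimal base
with respect to `ω`. -/
theorem greedy_is_optimal_base {U : Type*} [Fintype U] [DecidableEq U]
    (Indep : Finset U → Prop)
    (h_nonempty : Indep ∅)
    (h_subset : ∀ I J : Finset U, I ⊆ J → Indep J → Indep I)
    (h_exch : ∀ I J : Finset U, Indep I → Indep J → I.card < J.card →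
      ∃ u ∈ J \ I, Indep (insert u I))
    (ω : U → ℕ) (ξ : ℕ → U)
    (hbij : Function.Bijective fun i : Fin (Fintype.card U) => ξ i)
    (hmono : ∀ i j, i ≤ j → j < Fintype.card U → ω (ξ j) ≤ ω (ξ i)) :
    IsOptBase Indep ω (greedy Indep ξ (Fintype.card U)) := by
  obtain ⟨hbase, hopt⟩ := greedy_is_optimal_base' Indep h_nonempty h_subset h_exch ω ξ hbij hmono
  exact ⟨⟨hbase.1, hbase.2⟩, fun B' hB' => hopt B' hB'.1⟩
end
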